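/- arXiv:1601.06872 — 9 statements merged into one kernel-verified Lean document; each statement's English description precedes it below -/
import Mathlib

section
/- Let F be a field with char F zero or coprime to n, and g(X) a polynomial over F with deg g(X) < n. Let d = deg gcd(g(X), X^n − 1) and r = min{m, n − d}. Then the rank of the generalized circulant matrix M(g)_{m×n} equals r. -/
open Polynomial Matrix Submodule

/-- The monic polynomial associated to `p` (and `0` for `p = 0`). -/
noncomputable def monicize {F : Type*} [Field F] (p : Polynomial F) : Polynomial F :=
  Polynomial.C p.leadingCoeff⁻¹ * p

/-- The monic greatest common divisor of two polynomials over a field. -/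
noncomputable def pgcd {F : Type*} [Field F] (p q : Polynomial F) : Polynomial F :=
  letI := Classical.decEq F
  monicize (EuclideanDomain.gcd p q)

/-- The monic least common multiple of two polynomials over a field. -/
noncomputable def plcm {F : Type*} [Field F] (p q : Polynomial F) : Polynomial F :=
  letI := Classical.decEq F
  monicize (EuclideanDomain.lcm p q)

/-- Generalized circulant matrix: `(i,k)`-entry is `g_{(k-i) mod n}`. -/
def circMat (F : Type*) [Field F] (m n : ℕ) (g : Polynomial F) :
    Matrix (Fin m) (Fin n) F :=
  Matrix.of fun i k => g.coeff ((k.1 + (n - 1) * i.1) % n)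

section Aux
variable {F : Type*} [Field F] {n : ℕ}

theorem myRootPow (hn : 0 < n) :
    (AdjoinRoot.root (X ^ n - 1 : F[X])) ^ n = 1 := by
  have h : AdjoinRoot.mk (X ^ n - 1 : F[X]) (X ^ n - 1) = 0 := AdjoinRoot.mk_self
  rw [map_sub, map_pow, AdjoinRoot.mk_X, _root_.map_one, sub_eq_zero] at h
  exact h

theorem myRootPowMod (hn : 0 < n) (a : ℕ) :
    (AdjoinRoot.root (X ^ n - 1 : F[X])) ^ (a % n) = (AdjoinRoot.root (X ^ n - 1 : F[X])) ^ a := by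
  conv_rhs => rw [← Nat.div_add_mod a n]
  rw [pow_add, pow_mul, myRootPow hn, one_pow, one_mul]

end Aux

theorem stmt_3 (F : Type*) [Field F]
    (m n : ℕ) (hm : 0 < m) (hn : 0 < n)
    (hchar : ringChar F = 0 ∨ Nat.Coprime (ringChar F) n)
    (g : Polynomial F) (hg : g.degree < n) :
    (circMat F m n g).rank
      = min m (n - (pgcd g (X ^ n - 1)).natDegree) := by
  letI := Classical.decEq F
  have hqm : (X ^ n - 1 : F[X]).Monic := by
    simpa using monic_X_pow_sub_C (1 : F) hn.ne'
  have hq0 : (X ^ n - 1 : F[X]) ≠ 0 := hqm.ne_zero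
  have hqd : (X ^ n - 1 : F[X]).natDegree = n := by
    have h : (X ^ n - C (1 : F)).natDegree = n := natDegree_X_pow_sub_C
    simpa using h
  by_cases hg0 : g = 0
  · -- zero polynomial: zero matrix, and gcd is X^n - 1
    subst hg0
    have h1 : circMat F m n 0 = 0 := by
      ext i k; simp [circMat]
    have h2 : pgcd (0 : F[X]) (X ^ n - 1) = X ^ n - 1 := by
      unfold pgcd monicize
      rw [EuclideanDomain.gcd_zero_left, hqm.leadingCoeff, inv_one, _root_.map_one, one_mul]
    rw [h1, h2, hqd, Matrix.rank_zero, Nat.sub_self, min_eq_right (Nat.zero_le m)]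
  -- main case
  have hgnd : g.natDegree < n := (natDegree_lt_iff_degree_lt hg0).2 hg
  set q : F[X] := X ^ n - 1 with hq
  set G : F[X] := EuclideanDomain.gcd g q with hGdef
  have hGg : G ∣ g := EuclideanDomain.gcd_dvd_left g q
  have hGq : G ∣ q := EuclideanDomain.gcd_dvd_right g q
  have hGne : G ≠ 0 := by
    intro h
    exact hg0 (EuclideanDomain.gcd_eq_zero_iff.mp h).1
  set d : ℕ := G.natDegree with hd
  have hpgcd : (pgcd g q).natDegree = d := by
    unfold pgcd monicize
    exact natDegree_C_mul (inv_ne_zero (leadingCoeff_ne_zero.2 hGne))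
  set w : F[X] := q / G with hw
  have hqw : G * w = q := EuclideanDomain.mul_div_cancel' hGne hGq
  have hwne : w ≠ 0 := by
    intro h; rw [h, mul_zero] at hqw; exact hq0 hqw.symm
  have hwdeg : w.natDegree = n - d := by
    have h := natDegree_mul hGne hwne
    rw [hqw, hqd] at h
    omega
  have hdlt : d < n := by
    have h1 : d ≤ g.natDegree := natDegree_le_of_dvd hGg hg0
    omega
  -- the ring R = F[X]/(X^n - 1)
  set ρ : AdjoinRoot q := AdjoinRoot.root q with hρ
  set γ : AdjoinRoot q := AdjoinRoot.mk q g with hγ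
  have hrmod : ∀ a : ℕ, ρ ^ (a % n) = ρ ^ a := myRootPowMod hn
  -- basis
  set pb : PowerBasis F (AdjoinRoot q) := AdjoinRoot.powerBasis' hqm with hpb
  have hdim : pb.dim = n := hqd
  set b : Module.Basis (Fin n) F (AdjoinRoot q) := pb.basis.reindex (finCongr hdim) with hbdef
  have hb : ∀ k : Fin n, b k = ρ ^ (k : ℕ) := by
    intro k
    rw [hbdef, Module.Basis.reindex_apply, pb.basis_eq_pow]
    simp [hpb, AdjoinRoot.powerBasis'_gen, hρ]
  -- key identity: the i-th row corresponds to ρ^i * γ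
  have key : ∀ i : ℕ,
      (∑ k : Fin n, g.coeff (((k : ℕ) + (n - 1) * i) % n) • ρ ^ (k : ℕ)) = ρ ^ i * γ := by
    intro i
    have hni : (n - 1) * i + i = n * i := by
      cases n with
      | zero => omega
      | succ n' => simp [Nat.succ_mul]
    have hni' : i + (n - 1) * i = n * i := by rw [add_comm]; exact hni
    have mod1 : ∀ j : ℕ, j < n → ((j + i) % n + (n - 1) * i) % n = j := by
      intro j hj
      rw [Nat.mod_add_mod, add_assoc, hni', Nat.add_mul_mod_self_left, Nat.mod_eq_of_lt hj]
    have mod2 : ∀ k : ℕ, k < n → ((k + (n - 1) * i) % n + i) % n = k := by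
      intro k hk
      rw [Nat.mod_add_mod, add_assoc, hni, Nat.add_mul_mod_self_left, Nat.mod_eq_of_lt hk]
    have hlt : ∀ a : ℕ, a % n < n := fun a => Nat.mod_lt _ hn
    let τ : Fin n ≃ Fin n :=
      { toFun := fun j => ⟨((j : ℕ) + i) % n, hlt _⟩
        invFun := fun k => ⟨((k : ℕ) + (n - 1) * i) % n, hlt _⟩
        left_inv := fun j => Fin.ext (mod1 j j.2)
        right_inv := fun k => Fin.ext (mod2 k k.2) }
    rw [← Equiv.sum_comp τ (fun k : Fin n => g.coeff (((k : ℕ) + (n - 1) * i) % n) • ρ ^ (k : ℕ))]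
    have hterm : ∀ j : Fin n,
        g.coeff ((((j : ℕ) + i) % n + (n - 1) * i) % n) • ρ ^ (((j : ℕ) + i) % n)
          = g.coeff (j : ℕ) • (ρ ^ (j : ℕ) * ρ ^ i) := by
      intro j
      rw [mod1 _ j.2, hrmod, pow_add]
    calc (∑ j : Fin n, g.coeff ((((j:ℕ) + i) % n + (n - 1) * i) % n) • ρ ^ (((j:ℕ) + i) % n))
        = ∑ j : Fin n, g.coeff (j : ℕ) • (ρ ^ (j : ℕ) * ρ ^ i) := by
          exact Finset.sum_congr rfl fun j _ => hterm j
      _ = (∑ j : Fin n, g.coeff (j : ℕ) • ρ ^ (j : ℕ)) * ρ ^ i := by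
          rw [Finset.sum_mul]; simp [smul_mul_assoc]
      _ = ρ ^ i * γ := by
          rw [hγ, ← AdjoinRoot.aeval_eq, aeval_eq_sum_range' hgnd ρ,
            ← Fin.sum_univ_eq_sum_range (fun j => g.coeff j • ρ ^ j) n, mul_comm]
  -- rank equals dimension of span of the ρ^i * γ
  have hrank : (circMat F m n g).rank
      = Module.finrank F (span F (Set.range fun i : Fin m => ρ ^ (i : ℕ) * γ)) := by
    rw [Matrix.rank_eq_finrank_span_row]
    let e : (Fin n → F) ≃ₗ[F] AdjoinRoot q := b.equivFun.symm
    have hfun : (⇑e ∘ circMat F m n g) = fun i : Fin m => ρ ^ (i : ℕ) * γ := by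
      funext i
      show e (circMat F m n g i) = ρ ^ (i : ℕ) * γ
      rw [show e (circMat F m n g i) = b.equivFun.symm (circMat F m n g i) from rfl,
        Module.Basis.equivFun_symm_apply]
      rw [← key (i : ℕ)]
      exact Finset.sum_congr rfl fun k _ => by rw [hb k]; rfl
    have himg : (⇑e '' Set.range (circMat F m n g).row)
        = Set.range fun i : Fin m => ρ ^ (i : ℕ) * γ := by
      rw [← Set.range_comp]; exact congrArg Set.range hfun
    rw [← LinearEquiv.finrank_map_eq e, Submodule.map_span]
    rw [show (⇑(e : (Fin n → F) →ₗ[F] AdjoinRoot q) '' Set.range (circMat F m n g).row)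
        = Set.range fun i : Fin m => ρ ^ (i : ℕ) * γ from himg]
  -- core divisibility lemma
  have hcore : ∀ c : F[X], q ∣ c * g → w ∣ c := by
    intro c hdvd
    obtain ⟨g', hg'⟩ := hGg
    have hu : IsCoprime w g' := by
      rw [← EuclideanDomain.gcd_isUnit_iff]
      have h1 : G * EuclideanDomain.gcd w g' ∣ q := by
        rw [← hqw]; exact mul_dvd_mul_left G (EuclideanDomain.gcd_dvd_left _ _)
      have h2 : G * EuclideanDomain.gcd w g' ∣ g := by
        rw [hg']; exact mul_dvd_mul_left G (EuclideanDomain.gcd_dvd_right _ _)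
      have h3 : G * EuclideanDomain.gcd w g' ∣ G := EuclideanDomain.dvd_gcd h2 h1
      have h4 : G * EuclideanDomain.gcd w g' ∣ G * 1 := by rwa [mul_one]
      exact isUnit_of_dvd_one ((mul_dvd_mul_iff_left hGne).mp h4)
    have h5 : w ∣ c * g' := by
      rcases hdvd with ⟨t, ht⟩
      refine ⟨t, mul_left_cancel₀ hGne ?_⟩
      calc G * (c * g') = c * (G * g') := by ring
        _ = c * g := by rw [← hg']
        _ = q * t := ht
        _ = G * (w * t) := by rw [← hqw]; ring
    exact hu.dvd_of_dvd_mul_right h5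
  -- linear independence of ρ^i γ for i < r ≤ n - d
  have hindep : ∀ r : ℕ, r ≤ n - d →
      LinearIndependent F (fun i : Fin r => ρ ^ (i : ℕ) * γ) := by
    intro r hr
    rw [Fintype.linearIndependent_iff]
    intro c hc i
    set p : F[X] := ∑ i : Fin r, C (c i) * X ^ (i : ℕ) with hpd
    have haev : aeval ρ p = ∑ i : Fin r, c i • ρ ^ (i : ℕ) := by
      rw [hpd, map_sum]
      exact Finset.sum_congr rfl fun i _ => by
        rw [_root_.map_mul, aeval_C, map_pow, aeval_X, Algebra.smul_def]
    have hmk : AdjoinRoot.mk q (p * g) = 0 := by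
      rw [_root_.map_mul, ← AdjoinRoot.aeval_eq, haev, ← hγ, Finset.sum_mul]
      rw [show (∑ i : Fin r, c i • ρ ^ (i:ℕ) * γ) = ∑ i : Fin r, c i • (ρ ^ (i:ℕ) * γ) from
        Finset.sum_congr rfl fun i _ => smul_mul_assoc _ _ _]
      exact hc
    have hdvd : w ∣ p := hcore p (AdjoinRoot.mk_eq_zero.mp hmk)
    have hpdeg : p.degree < (r : WithBot ℕ) := by
      apply lt_of_le_of_lt (degree_sum_le _ _)
      rw [Finset.sup_lt_iff (by exact_mod_cast WithBot.bot_lt_coe r)]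
      intro j _
      exact lt_of_le_of_lt (degree_C_mul_X_pow_le _ _) (by exact_mod_cast j.2)
    have hp0 : p = 0 := by
      refine eq_zero_of_dvd_of_degree_lt hdvd ?_
      rw [degree_eq_natDegree hwne, hwdeg]
      exact lt_of_lt_of_le hpdeg (by exact_mod_cast hr)
    have := congrArg (fun t : F[X] => t.coeff (i : ℕ)) hp0
    simpa [hpd, finset_sum_coeff, coeff_C_mul, coeff_X_pow, Fin.val_eq_val,
      Finset.sum_ite_eq'] using this
  -- the span W of the first n - d vectors
  set W : Submodule F (AdjoinRoot q) :=
    span F (Set.range fun j : Fin (n - d) => ρ ^ (j : ℕ) * γ) with hWdef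
  have hmemW : ∀ j : ℕ, j < n - d → ρ ^ j * γ ∈ W := fun j hj =>
    subset_span ⟨⟨j, hj⟩, rfl⟩
  have hlc : w.coeff (n - d) ≠ 0 := by
    rw [← hwdeg]; exact leadingCoeff_ne_zero.2 hwne
  have hstep : ρ ^ (n - d) * γ ∈ W := by
    have h0 : (aeval ρ w) * γ = 0 := by
      obtain ⟨g', hg'⟩ := hGg
      rw [AdjoinRoot.aeval_eq, hγ, ← _root_.map_mul, AdjoinRoot.mk_eq_zero]
      exact ⟨g', by rw [← hqw, hg']; ring⟩
    have hexp : aeval ρ w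
        = (∑ j ∈ Finset.range (n - d), w.coeff j • ρ ^ j) + w.coeff (n - d) • ρ ^ (n - d) := by
      rw [aeval_eq_sum_range' (n := n - d + 1) (by omega) ρ, Finset.sum_range_succ]
    have h1 : w.coeff (n - d) • (ρ ^ (n - d) * γ)
        = - ∑ j ∈ Finset.range (n - d), w.coeff j • (ρ ^ j * γ) := by
      have h2 := h0
      rw [hexp, add_mul, Finset.sum_mul] at h2
      simp only [smul_mul_assoc] at h2
      exact eq_neg_of_add_eq_zero_right h2
    have h3 : w.coeff (n - d) • (ρ ^ (n - d) * γ) ∈ W := by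
      rw [h1]
      exact neg_mem (sum_mem fun j hj =>
        smul_mem _ _ (hmemW j (Finset.mem_range.mp hj)))
    have h4 := W.smul_mem (w.coeff (n - d))⁻¹ h3
    rwa [inv_smul_smul₀ hlc] at h4
  have hmul : ∀ x ∈ W, ρ * x ∈ W := by
    intro x hx
    rw [hWdef] at hx
    induction hx using Submodule.span_induction with
    | mem x hx =>
        obtain ⟨j, rfl⟩ := hx
        rw [← mul_assoc, ← pow_succ']
        rcases lt_or_eq_of_le (Nat.succ_le_of_lt j.2) with h | h
        · exact hmemW _ h
        · rw [show (j : ℕ) + 1 = n - d from h]; exact hstep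
    | zero => simp
    | add x y _ _ hx hy => rw [mul_add]; exact add_mem hx hy
    | smul a x _ hx => rw [mul_smul_comm]; exact smul_mem _ _ hx
  have hall : ∀ i : ℕ, ρ ^ i * γ ∈ W := by
    intro i
    induction i with
    | zero => exact hmemW 0 (by omega)
    | succ i ih =>
        have h := hmul _ ih
        rwa [← mul_assoc, ← pow_succ'] at h
  -- conclusion
  rw [hrank, hpgcd]
  rcases le_or_gt m (n - d) with hc | hc
  · rw [min_eq_left hc, finrank_span_eq_card (hindep m hc), Fintype.card_fin]
  · rw [min_eq_right hc.le]
    have hspan : span F (Set.range fun i : Fin m => ρ ^ (i : ℕ) * γ) = W := by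
      apply le_antisymm
      · rw [span_le]; rintro x ⟨i, rfl⟩; exact hall i
      · rw [hWdef, span_le]
        rintro x ⟨j, rfl⟩
        exact subset_span ⟨⟨(j : ℕ), by omega⟩, rfl⟩
    rw [hspan, hWdef, finrank_span_eq_card (hindep (n - d) le_rfl), Fintype.card_fin]
end

section
/- Let F be a field with char F zero or coprime to n, g(X) a polynomial over F with deg g(X) < n, and r = min{m, n − deg gcd(g(X), X^n − 1)}. Then the first r rows of the generalized circulant matrix M(g)_{m×n} are linearly independent. -/
open Polynomial Matrix

private lemma harith' (n i j : ℕ) (hn : 0 < n) : i + j + (n-1)*i = j + n*i := by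
  have h : n*i = (n-1)*i + i := by
    cases n with
    | zero => omega
    | succ m => simp [Nat.succ_mul]
  omega

private lemma key_row' (F : Type*) [Field F] (n : ℕ) (hn : 0 < n) (g : Polynomial F)
    (hgdeg : g.natDegree < n) (i : ℕ) :
    AdjoinRoot.mk ((X:Polynomial F)^n - 1)
        (∑ k ∈ Finset.range n, C (g.coeff ((k + (n-1)*i) % n)) * X ^ k)
      = (AdjoinRoot.root ((X:Polynomial F)^n - 1))^i
          * AdjoinRoot.mk ((X:Polynomial F)^n - 1) g := by
  set f : Polynomial F := X^n - 1 with hf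
  set ρ := AdjoinRoot.root f with hρdef
  have hρ : ρ ^ n = 1 := by
    have h := AdjoinRoot.mk_self (f := f)
    rw [hf, map_sub, map_pow, _root_.map_one, AdjoinRoot.mk_X, sub_eq_zero] at h
    exact h
  have hpowmod : ∀ t, ρ ^ t = ρ ^ (t % n) := by
    intro t
    conv_lhs => rw [← Nat.mod_add_div t n]
    rw [pow_add, pow_mul, hρ, one_pow, mul_one]
  conv_rhs => rw [as_sum_range' g n hgdeg]
  rw [map_sum, map_sum, Finset.mul_sum]
  refine Finset.sum_nbij' (fun k => (k + (n-1)*i) % n) (fun j => (i + j) % n)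
    (fun a _ => Finset.mem_range.mpr (Nat.mod_lt _ hn))
    (fun a _ => Finset.mem_range.mpr (Nat.mod_lt _ hn))
    (fun a ha => ?_) (fun a ha => ?_) (fun k hk => ?_)
  · show (i + (a + (n-1)*i) % n) % n = a
    rw [Nat.add_mod_mod, ← Nat.add_assoc, harith' n i a hn, Nat.add_mul_mod_self_left,
      Nat.mod_eq_of_lt (Finset.mem_range.mp ha)]
  · show ((i + a) % n + (n-1)*i) % n = a
    rw [Nat.mod_add_mod, harith' n i a hn, Nat.add_mul_mod_self_left,
      Nat.mod_eq_of_lt (Finset.mem_range.mp ha)]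
  · show AdjoinRoot.mk f (C (g.coeff ((k + (n-1)*i) % n)) * X ^ k)
      = ρ ^ i * AdjoinRoot.mk f (monomial ((k + (n-1)*i) % n) (g.coeff ((k + (n-1)*i) % n)))
    set j := (k + (n-1)*i) % n with hjdef
    have hk' : k < n := Finset.mem_range.mp hk
    have hij : (i + j) % n = k := by
      rw [hjdef, Nat.add_mod_mod, ← Nat.add_assoc, harith' n i k hn,
        Nat.add_mul_mod_self_left, Nat.mod_eq_of_lt hk']
    rw [← C_mul_X_pow_eq_monomial, _root_.map_mul, _root_.map_mul, map_pow, map_pow,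
      AdjoinRoot.mk_X, ← mul_assoc, mul_comm (ρ ^ i), mul_assoc, ← pow_add,
      hpowmod (i + j), hij]

theorem stmt_4 (F : Type*) [Field F]
    (m n : ℕ) (hm : 0 < m) (hn : 0 < n)
    (hchar : ringChar F = 0 ∨ Nat.Coprime (ringChar F) n)
    (g : Polynomial F) (hg : g.degree < n)
    (r : ℕ) (hr : r = min m (n - (pgcd g (X ^ n - 1)).natDegree)) :
    LinearIndependent F
      (fun t : Fin r => circMat F m n g ⟨t.1, by omega⟩) := by
  letI : DecidableEq F := Classical.decEq F
  set f : Polynomial F := X ^ n - 1 with hfdef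
  have hfm : f.Monic := by
    simpa [hfdef] using monic_X_pow_sub_C (1 : F) (by omega : n ≠ 0)
  have hf0 : f ≠ 0 := hfm.ne_zero
  have hfdeg : f.natDegree = n := by
    simpa [hfdef] using natDegree_X_pow_sub_C (n := n) (r := (1:F))
  set d : Polynomial F := EuclideanDomain.gcd g f with hddef
  have hd0 : d ≠ 0 := fun h => hf0 ((EuclideanDomain.gcd_eq_zero_iff.mp h).2)
  have hgdeg : g.natDegree < n := by
    rcases eq_or_ne g 0 with h | h
    · simpa [h] using hn
    · exact (natDegree_lt_iff_degree_lt h).mpr hg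
  have hrn : r ≤ n - d.natDegree := by
    have hpgcd : (pgcd g (X^n - 1) : Polynomial F).natDegree = d.natDegree := by
      have h1 : (pgcd g (X^n - 1) : Polynomial F) = C d.leadingCoeff⁻¹ * d := rfl
      rw [h1, natDegree_C_mul (inv_ne_zero (leadingCoeff_ne_zero.mpr hd0))]
    rw [hr, hpgcd]
    exact min_le_right _ _
  rw [Fintype.linearIndependent_iff]
  intro c hc
  have hck : ∀ k : Fin n, ∑ i : Fin r, c i * g.coeff ((k.1 + (n-1)*i.1) % n) = 0 := by
    intro k
    have h := congrFun hc k
    simpa [circMat, Finset.sum_apply] using h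
  set cpoly : Polynomial F := ∑ i : Fin r, C (c i) * X ^ (i:ℕ) with hcp
  have hdvd : f ∣ cpoly * g := by
    rw [← AdjoinRoot.mk_eq_zero]
    have step1 : AdjoinRoot.mk f (cpoly * g)
        = AdjoinRoot.mk f (∑ i : Fin r, C (c i) *
            (∑ k ∈ Finset.range n, C (g.coeff ((k + (n-1)*i.1) % n)) * X ^ k)) := by
      rw [_root_.map_mul, hcp, map_sum, Finset.sum_mul, map_sum]
      refine Finset.sum_congr rfl fun i _ => ?_
      rw [_root_.map_mul, _root_.map_mul, map_pow, AdjoinRoot.mk_X, mul_assoc,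
        ← key_row' F n hn g hgdeg i.1, ← _root_.map_mul]
    rw [step1]
    have step2 : (∑ i : Fin r, C (c i) *
        (∑ k ∈ Finset.range n, C (g.coeff ((k + (n-1)*i.1) % n)) * X ^ k))
        = (0 : Polynomial F) := by
      have hterm : ∀ i : Fin r, C (c i) *
          (∑ k ∈ Finset.range n, C (g.coeff ((k + (n-1)*i.1) % n)) * X ^ k)
          = ∑ k ∈ Finset.range n, C (c i * g.coeff ((k + (n-1)*i.1) % n)) * X ^ k := by
        intro i
        rw [Finset.mul_sum]
        exact Finset.sum_congr rfl fun k _ => by rw [← mul_assoc, ← C_mul]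
      simp_rw [hterm]
      rw [Finset.sum_comm]
      refine Finset.sum_eq_zero fun k hk => ?_
      rw [← Finset.sum_mul, ← map_sum]
      have h := hck ⟨k, Finset.mem_range.mp hk⟩
      simp only [] at h
      rw [h]
      simp
    rw [step2, map_zero]
  have hc0 : cpoly = 0 := by
    by_contra hne
    set g' := g / d with hg'
    set f' := f / d with hf'
    have hfd : d * f' = f :=
      EuclideanDomain.mul_div_cancel' hd0 (EuclideanDomain.gcd_dvd_right g f)
    have hgd : d * g' = g :=
      EuclideanDomain.mul_div_cancel' hd0 (EuclideanDomain.gcd_dvd_left g f)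
    have hf'0 : f' ≠ 0 := by
      intro h; rw [h, mul_zero] at hfd; exact hf0 hfd.symm
    have hcop : IsCoprime g' f' := by
      refine ⟨EuclideanDomain.gcdA g f, EuclideanDomain.gcdB g f, ?_⟩
      apply mul_left_cancel₀ hd0
      have hb := EuclideanDomain.gcd_eq_gcd_ab g f
      calc d * (EuclideanDomain.gcdA g f * g' + EuclideanDomain.gcdB g f * f')
          = g * EuclideanDomain.gcdA g f + f * EuclideanDomain.gcdB g f := by
            rw [← hgd, ← hfd]; ring
        _ = d := hb.symm
        _ = d * 1 := (mul_one d).symm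
    have hdvd' : f' ∣ cpoly * g' := by
      have h2 : d * f' ∣ d * (cpoly * g') := by
        rw [hfd, show d * (cpoly * g') = cpoly * g from by rw [← hgd]; ring]
        exact hdvd
      exact (mul_dvd_mul_iff_left hd0).mp h2
    have hdvdc : f' ∣ cpoly := (hcop.symm).dvd_of_dvd_mul_right hdvd'
    have hle : f'.natDegree ≤ cpoly.natDegree := Polynomial.natDegree_le_of_dvd hdvdc hne
    have hdegs : d.natDegree + f'.natDegree = n := by
      rw [← hfdeg, ← hfd, natDegree_mul hd0 hf'0]
    have hcdeg : cpoly.natDegree < r := by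
      refine (natDegree_lt_iff_degree_lt hne).mpr ?_
      rw [hcp]
      refine lt_of_le_of_lt (degree_sum_le _ _) ?_
      refine (Finset.sup_lt_iff (by exact_mod_cast WithBot.bot_lt_coe r)).mpr ?_
      intro i _
      exact lt_of_le_of_lt (degree_C_mul_X_pow_le _ _) (by exact_mod_cast i.2)
    omega
  intro i
  have hcoeff : cpoly.coeff i.1 = c i := by
    rw [hcp, finset_sum_coeff]
    rw [Finset.sum_eq_single i]
    · simp
    · intro j _ hji
      rw [coeff_C_mul, coeff_X_pow, if_neg (fun h => hji (Fin.ext h.symm)), mul_zero]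
    · intro h; exact absurd (Finset.mem_univ i) h
  rw [← hcoeff, hc0, coeff_zero]
end

section
/- Let F be a field with char F zero or coprime to n, g(X) a polynomial over F with deg g(X) < n, and r = min{m, n − deg gcd(g(X), X^n − 1)}. Then any r consecutive rows of the generalized circulant matrix M(g)_{m×n} are linearly independent, i.e., for any 0 ≤ i with i + r ≤ m, the rows i, i+1, ..., i+r−1 are linearly independent. -/
open Polynomial Matrix

section Aux

variable {F : Type*} [Field F]

lemma aux_fmonic {n : ℕ} (hn : 0 < n) : (X ^ n - 1 : F[X]).Monic := by
  simpa using monic_X_pow_sub_C (1 : F) hn.ne'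

lemma aux_pow_mod {n : ℕ} (hn : 0 < n) (j : ℕ) :
    (X ^ j : F[X]) %ₘ (X ^ n - 1) = X ^ (j % n) := by
  induction j using Nat.strong_induction_on with
  | _ j ih =>
    rcases lt_or_ge j n with h | h
    · rw [Nat.mod_eq_of_lt h, (modByMonic_eq_self_iff (aux_fmonic hn)).2]
      have : ((X ^ n - 1 : F[X])).degree = n := by
        simpa using degree_X_pow_sub_C hn (1 : F)
      rw [this, degree_X_pow]
      exact_mod_cast h
    · have heq : (X ^ j : F[X]) %ₘ (X ^ n - 1) = (X ^ (j - n)) %ₘ (X ^ n - 1) := by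
        apply modByMonic_eq_of_dvd_sub (aux_fmonic hn)
        exact ⟨X ^ (j - n), by rw [sub_mul, one_mul, ← pow_add, Nat.add_sub_cancel' h]⟩
      rw [heq, ih (j - n) (by omega), Nat.mod_eq_sub_mod h]

lemma aux_s0 {n k j : ℕ} (hn : 0 < n) (hk : k < n) :
    (j + (k + (n - 1) * j) % n) % n = k := by
  obtain ⟨n', rfl⟩ : ∃ n', n = n' + 1 := ⟨n - 1, by omega⟩
  have h1 : (j + (k + (n' + 1 - 1) * j) % (n' + 1)) % (n' + 1)
      = (j + (k + n' * j)) % (n' + 1) := by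
    simp [Nat.add_mod_mod]
  rw [h1]
  have h2 : j + (k + n' * j) = k + (n' + 1) * j := by ring
  rw [h2, Nat.add_mul_mod_self_left, Nat.mod_eq_of_lt hk]

lemma aux_unique {n k j s : ℕ} (hn : 0 < n) (hk : k < n) (hs : s < n)
    (h : (j + s) % n = k) : s = (k + (n - 1) * j) % n := by
  set s0 := (k + (n - 1) * j) % n with hs0
  have hs0lt : s0 < n := Nat.mod_lt _ hn
  have h2 : (j + s0) % n = k := aux_s0 hn hk
  have h3 : j + s ≡ j + s0 [MOD n] := by
    unfold Nat.ModEq; rw [h, h2]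
  have h4 : s ≡ s0 [MOD n] := Nat.ModEq.add_left_cancel' j h3
  have h5 : s % n = s0 % n := h4
  rwa [Nat.mod_eq_of_lt hs, Nat.mod_eq_of_lt hs0lt] at h5

lemma aux_row {n : ℕ} (hn : 0 < n) (g : F[X]) (hg : g.natDegree < n)
    (j k : ℕ) (hk : k < n) :
    ((X ^ j * g) %ₘ (X ^ n - 1)).coeff k = g.coeff ((k + (n - 1) * j) % n) := by
  have hrw : (X ^ j * g : F[X]) = ∑ s ∈ Finset.range n, g.coeff s • X ^ (j + s) := by
    conv_lhs => rw [g.as_sum_range' n hg]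
    rw [Finset.mul_sum]
    refine Finset.sum_congr rfl fun s _ => ?_
    rw [smul_eq_C_mul, ← C_mul_X_pow_eq_monomial, pow_add]
    ring
  rw [hrw]
  have hsum : (∑ s ∈ Finset.range n, g.coeff s • (X:F[X]) ^ (j + s)) %ₘ (X ^ n - 1)
      = ∑ s ∈ Finset.range n, g.coeff s • ((X:F[X]) ^ (j + s) %ₘ (X ^ n - 1)) := by
    have := map_sum (modByMonicHom ((X:F[X]) ^ n - 1))
      (fun s => g.coeff s • (X:F[X]) ^ (j + s)) (Finset.range n)
    simpa only [modByMonicHom_apply, smul_modByMonic] using this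
  rw [hsum]
  rw [finset_sum_coeff]
  have hterm : ∀ s ∈ Finset.range n,
      (g.coeff s • ((X:F[X]) ^ (j + s) %ₘ (X ^ n - 1))).coeff k
        = if k = (j + s) % n then g.coeff s else 0 := by
    intro s _
    rw [aux_pow_mod hn, coeff_smul, coeff_X_pow, smul_eq_mul]
    split <;> simp
  rw [Finset.sum_congr rfl hterm]
  rw [Finset.sum_eq_single ((k + (n - 1) * j) % n)]
  · rw [if_pos (aux_s0 hn hk).symm]
  · intro b hb hne
    rw [if_neg]
    intro hcon
    exact hne (aux_unique hn hk (Finset.mem_range.1 hb) hcon.symm)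
  · intro hcon
    exact absurd (Finset.mem_range.2 (Nat.mod_lt _ hn)) hcon

lemma aux_main {m n : ℕ} (hn : 0 < n)
    (g : Polynomial F) (hg : g.degree < n)
    (r : ℕ) (hr : r = min m (n - (pgcd g (X ^ n - 1)).natDegree))
    (i : ℕ)
    (v : Fin r → (Fin n → F))
    (hv : ∀ (t : Fin r) (k : Fin n), v t k = g.coeff ((k.1 + (n - 1) * (i + t.1)) % n)) :
    LinearIndependent F v := by
  letI := Classical.decEq F
  rw [Fintype.linearIndependent_iff]
  intro c hc t0
  have hrpos : 0 < r := t0.pos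
  set f : F[X] := X ^ n - 1 with hfdef
  have hfm : f.Monic := aux_fmonic hn
  have hf0 : f ≠ 0 := hfm.ne_zero
  have hgnd : g.natDegree < n := by
    rcases eq_or_ne g 0 with rfl | hgne
    · simpa using hn
    · exact (natDegree_lt_iff_degree_lt hgne).2 (by exact_mod_cast hg)
  set cp : F[X] := ∑ t : Fin r, C (c t) * X ^ (t : ℕ) with hcp
  -- Step 1 : f ∣ X^i * cp * g
  have hXicpg : (X : F[X]) ^ i * cp * g = ∑ t : Fin r, c t • ((X : F[X]) ^ (i + (t : ℕ)) * g) := by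
    rw [hcp, Finset.mul_sum, Finset.sum_mul]
    refine Finset.sum_congr rfl fun t _ => ?_
    rw [smul_eq_C_mul, pow_add]
    ring
  have hmodsum : ((X : F[X]) ^ i * cp * g) %ₘ f
      = ∑ t : Fin r, c t • (((X : F[X]) ^ (i + (t : ℕ)) * g) %ₘ f) := by
    rw [hXicpg]
    have := map_sum (modByMonicHom f)
      (fun t : Fin r => c t • ((X : F[X]) ^ (i + (t : ℕ)) * g)) Finset.univ
    simpa only [modByMonicHom_apply, smul_modByMonic] using this
  have hdvd1 : f ∣ (X : F[X]) ^ i * cp * g := by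
    rw [← modByMonic_eq_zero_iff_dvd hfm, hmodsum]
    ext k
    rw [finset_sum_coeff, coeff_zero]
    rcases lt_or_ge k n with hk | hk
    · have hterm : ∀ t : Fin r,
          (c t • (((X : F[X]) ^ (i + (t : ℕ)) * g) %ₘ f)).coeff k
            = c t * v t ⟨k, hk⟩ := by
        intro t
        rw [coeff_smul, smul_eq_mul, aux_row hn g hgnd _ _ hk, hv t ⟨k, hk⟩]
      rw [Finset.sum_congr rfl fun t _ => hterm t]
      have := congrFun hc ⟨k, hk⟩
      simpa [Finset.sum_apply] using this
    · refine Finset.sum_eq_zero fun t _ => ?_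
      rw [coeff_smul, coeff_eq_zero_of_degree_lt, smul_zero]
      refine lt_of_lt_of_le (degree_modByMonic_lt _ hfm) ?_
      have : f.degree = (n : WithBot ℕ) := by simpa using degree_X_pow_sub_C hn (1 : F)
      rw [this]
      exact_mod_cast hk
  -- Step 2 : f ∣ cp * g
  have hXf : IsCoprime ((X : F[X]) ^ i) f := by
    have hnd : ¬ (X : F[X]) ∣ f := by
      rw [X_dvd_iff, hfdef]
      simp [coeff_X_pow, Ne.symm hn.ne']
    exact ((prime_X.coprime_iff_not_dvd).2 hnd).pow_left
  have hdvd2 : f ∣ cp * g :=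
    hXf.symm.dvd_of_dvd_mul_left (by rwa [mul_assoc] at hdvd1)
  -- Step 3 : h ∣ cp  where f = d * h,  d = gcd g f
  set d := EuclideanDomain.gcd g f with hddef
  obtain ⟨h, hfh⟩ : d ∣ f := EuclideanDomain.gcd_dvd_right g f
  have hd0 : d ≠ 0 := fun h0 => hf0 (by rw [hfh, h0, zero_mul])
  have hh0 : h ≠ 0 := fun h0 => hf0 (by rw [hfh, h0, mul_zero])
  have hbez : d = g * EuclideanDomain.gcdA g f + f * EuclideanDomain.gcdB g f :=
    EuclideanDomain.gcd_eq_gcd_ab g f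
  have hdvd3 : f ∣ cp * d := by
    have h1 : f ∣ cp * g * EuclideanDomain.gcdA g f := hdvd2.mul_right _
    have h2 : f ∣ f * (cp * EuclideanDomain.gcdB g f) := dvd_mul_right _ _
    have h3 := dvd_add h1 h2
    have heq : cp * d = cp * g * EuclideanDomain.gcdA g f + f * (cp * EuclideanDomain.gcdB g f) := by
      rw [hbez]; ring
    rwa [← heq] at h3
  have hdvd4 : h ∣ cp := by
    obtain ⟨e, he⟩ := hdvd3
    refine ⟨e, mul_left_cancel₀ hd0 ?_⟩
    calc d * cp = cp * d := mul_comm _ _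
      _ = f * e := he
      _ = d * (h * e) := by rw [hfh]; ring
  -- Step 4 : degrees
  have hnf : f.natDegree = n := by
    rw [hfdef]
    simpa using natDegree_X_pow_sub_C (n := n) (r := (1 : F))
  have hdn : d.natDegree + h.natDegree = n := by
    rw [← hnf, hfh, natDegree_mul hd0 hh0]
  have hpgcd : pgcd g f = monicize d := rfl
  have hpd : (pgcd g f).natDegree = d.natDegree := by
    rw [hpgcd, monicize]
    exact natDegree_C_mul (inv_ne_zero (leadingCoeff_ne_zero.2 hd0))
  have hrle : r ≤ h.natDegree := by
    rw [hr, hpd]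
    omega
  -- Step 5 : cp = 0
  have hcpdeg : cp.degree < (r : ℕ) := by
    apply lt_of_le_of_lt (degree_sum_le _ _)
    rw [Finset.sup_lt_iff (by exact_mod_cast WithBot.bot_lt_coe r)]
    intro t _
    refine lt_of_le_of_lt (degree_C_mul_X_pow_le _ _) ?_
    exact_mod_cast t.2
  have hcp0 : cp = 0 := by
    by_contra hne
    have hle : h.degree ≤ cp.degree := degree_le_of_dvd hdvd4 hne
    have hhd : h.degree = (h.natDegree : WithBot ℕ) := degree_eq_natDegree hh0
    have : (r : WithBot ℕ) ≤ cp.degree := by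
      refine le_trans ?_ hle
      rw [hhd]
      exact_mod_cast hrle
    exact absurd hcpdeg (not_lt.2 this)
  have hcoeff : cp.coeff (t0 : ℕ) = c t0 := by
    rw [hcp, finset_sum_coeff, Finset.sum_eq_single t0]
    · simp
    · intro b _ hbne
      rw [coeff_C_mul, coeff_X_pow, if_neg, mul_zero]
      exact fun hEq => hbne (Fin.ext hEq.symm)
    · simp
  rw [hcp0, coeff_zero] at hcoeff
  exact hcoeff.symm

end Aux

theorem stmt_5 (F : Type*) [Field F]
    (m n : ℕ) (hm : 0 < m) (hn : 0 < n)
    (hchar : ringChar F = 0 ∨ Nat.Coprime (ringChar F) n)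
    (g : Polynomial F) (hg : g.degree < n)
    (r : ℕ) (hr : r = min m (n - (pgcd g (X ^ n - 1)).natDegree))
    (i : ℕ) (hi : i + r ≤ m) :
    LinearIndependent F
      (fun t : Fin r => circMat F m n g ⟨i + t.1, by omega⟩) := by
  exact aux_main hn g hg r hr i _ (fun t k => rfl)
end

section
/- Let F be a field with char F coprime to n (or zero), and g(X) a polynomial of degree < n over F. Then the rank of the n×n circulant matrix C(g) associated with g equals n − deg gcd(g(X), X^n − 1). -/
open Polynomial Matrix

private lemma aux_mod (n j k : ℕ) (hn : 0 < n) (hj : j < n) :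
    ((j + k) % n + (n - 1) * k) % n = j := by
  rw [Nat.mod_add_mod]
  have h : j + k + (n - 1) * k = j + n * k := by
    have h2 : (n - 1) * k = n * k - k := by rw [Nat.sub_mul, one_mul]
    have h3 : k ≤ n * k := Nat.le_mul_of_pos_left k hn
    omega
  rw [h, Nat.add_mul_mod_self_left, Nat.mod_eq_of_lt hj]

theorem stmt_6 (F : Type*) [Field F]
    (n : ℕ) (hn : 0 < n)
    (hchar : ringChar F = 0 ∨ Nat.Coprime (ringChar F) n)
    (g : Polynomial F) (hg : g.degree < n) :
    (circMat F n n g).rank = n - (pgcd g (X ^ n - 1)).natDegree := by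
  classical
  haveI : NeZero n := ⟨hn.ne'⟩
  set f : Polynomial F := X ^ n - 1 with hfdef
  have hfm : f.Monic := by
    have := monic_X_pow_sub_C (1 : F) hn.ne'
    simpa [hfdef] using this
  have hf0 : f ≠ 0 := hfm.ne_zero
  have hfdeg : f.natDegree = n := by
    have := natDegree_X_pow_sub_C (n := n) (r := (1 : F))
    simpa [hfdef] using this
  set d : Polynomial F := EuclideanDomain.gcd g f with hd
  have hd0 : d ≠ 0 := fun h => hf0 (EuclideanDomain.gcd_eq_zero_iff.mp h).2
  have hdf : d ∣ f := EuclideanDomain.gcd_dvd_right g f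
  have hdg : d ∣ g := EuclideanDomain.gcd_dvd_left g f
  set e : Polynomial F := f / d with he
  have hfe : d * e = f := EuclideanDomain.mul_div_cancel' hd0 hdf
  have he0 : e ≠ 0 := by
    intro h; rw [h, mul_zero] at hfe; exact hf0 hfe.symm
  have hdeg : d.natDegree + e.natDegree = n := by
    rw [← hfdeg, ← hfe, natDegree_mul hd0 he0]
  -- the quotient ring and the multiplication map
  set Q := AdjoinRoot f with hQ
  set a : Q := AdjoinRoot.mk f g with ha
  set L : Q →ₗ[F] Q := LinearMap.mulLeft F a with hL
  -- the power basis
  have hdim : (AdjoinRoot.powerBasis hf0).dim = n := by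
    rw [AdjoinRoot.powerBasis_dim, hfdeg]
  set b : Module.Basis (Fin n) F Q :=
    (AdjoinRoot.powerBasis hf0).basis.reindex (finCongr hdim) with hb
  have hbk : ∀ k : Fin n, b k = AdjoinRoot.mk f (X ^ (k : ℕ)) := by
    intro k
    rw [hb, Module.Basis.reindex_apply, PowerBasis.coe_basis]
    simp [AdjoinRoot.powerBasis_gen, ← AdjoinRoot.mk_X, ← map_pow]
  -- X^n = 1 in Q
  have hXn : AdjoinRoot.mk f (X ^ n) = 1 := by
    have h0 : AdjoinRoot.mk f f = 0 := AdjoinRoot.mk_self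
    rw [hfdef, _root_.map_sub, _root_.map_one, sub_eq_zero] at h0
    exact h0
  have hXpow : ∀ m : ℕ, AdjoinRoot.mk f (X ^ m) = AdjoinRoot.mk f (X ^ (m % n)) := by
    intro m
    conv_lhs => rw [← Nat.div_add_mod m n, pow_add, pow_mul, _root_.map_mul, _root_.map_pow,
      hXn, one_pow, one_mul]
  have hgn : g.natDegree < n := by
    rcases eq_or_ne g 0 with h | h
    · simpa [h] using hn
    · exact natDegree_lt_iff_degree_lt h |>.mpr (by exact_mod_cast hg)
  -- key computation: L (b k) as a linear combination of basis vectors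
  have hkey : ∀ k : Fin n,
      L (b k) = ∑ i : Fin n, g.coeff (((i : ℕ) + (n - 1) * (k : ℕ)) % n) • b i := by
    intro k
    rw [hbk k, hL, LinearMap.mulLeft_apply, ha, ← _root_.map_mul]
    have hgsum : g * X ^ (k : ℕ) =
        ∑ j ∈ Finset.range n, g.coeff j • (X : Polynomial F) ^ (j + (k : ℕ)) := by
      conv_lhs => rw [g.as_sum_range' n hgn]
      rw [Finset.sum_mul]
      refine Finset.sum_congr rfl fun j _ => ?_
      rw [smul_eq_C_mul, ← C_mul_X_pow_eq_monomial, mul_assoc, ← pow_add]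
    rw [hgsum, _root_.map_sum]
    have h1 : ∀ j ∈ Finset.range n,
        AdjoinRoot.mk f (g.coeff j • (X : Polynomial F) ^ (j + (k : ℕ)))
          = g.coeff j • AdjoinRoot.mk f (X ^ ((j + (k : ℕ)) % n)) := by
      intro j _
      rw [← AdjoinRoot.smul_mk, hXpow]
    rw [Finset.sum_congr rfl h1, ← Fin.sum_univ_eq_sum_range
      (fun j => g.coeff j • AdjoinRoot.mk f (X ^ ((j + (k : ℕ)) % n)))]
    refine Fintype.sum_equiv (Equiv.addRight k) _ _ fun j => ?_
    rw [hbk]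
    have hj : (((Equiv.addRight k) j : Fin n) : ℕ) = ((j : ℕ) + (k : ℕ)) % n := by
      simp [Equiv.addRight, Fin.val_add]
    rw [hj, aux_mod n (j : ℕ) (k : ℕ) hn j.isLt]
  -- the circulant matrix is the transpose of the matrix of L
  have hM : LinearMap.toMatrix b b L = (circMat F n n g)ᵀ := by
    ext i k
    rw [LinearMap.toMatrix_apply, hkey k, Module.Basis.repr_sum_self]
    rfl
  have hrank : (circMat F n n g).rank = Module.finrank F (LinearMap.range L) := by
    rw [← Matrix.rank_transpose, ← hM,
      Matrix.rank_eq_finrank_range_toLin (LinearMap.toMatrix b b L) b b,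
      Matrix.toLin_toMatrix]
  -- compute the range of L via the polynomial map p ↦ mk (d * p)
  set P : Polynomial F →ₗ[F] Q :=
    { toFun := fun p => AdjoinRoot.mk f (d * p)
      map_add' := fun p q => by simp only [mul_add, _root_.map_add]
      map_smul' := fun c p => by
        simp only [RingHom.id_apply, mul_smul_comm, ← AdjoinRoot.smul_mk] } with hP
  have hrangeP : LinearMap.range P = LinearMap.range L := by
    ext x
    constructor
    · rintro ⟨p, rfl⟩
      refine ⟨AdjoinRoot.mk f (EuclideanDomain.gcdA g f * p), ?_⟩
      simp only [hP, LinearMap.coe_mk, AddHom.coe_mk, hL, LinearMap.mulLeft_apply, ha,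
        ← _root_.map_mul]
      have hbez : d = g * EuclideanDomain.gcdA g f + f * EuclideanDomain.gcdB g f :=
        EuclideanDomain.gcd_eq_gcd_ab g f
      have hh : g * (EuclideanDomain.gcdA g f * p) - d * p
          = -(f * (EuclideanDomain.gcdB g f * p)) := by linear_combination (-p) * hbez
      have h2 : AdjoinRoot.mk f (g * (EuclideanDomain.gcdA g f * p) - d * p) = 0 := by
        rw [hh, _root_.map_neg, _root_.map_mul, AdjoinRoot.mk_self, zero_mul, neg_zero]
      rw [_root_.map_sub, sub_eq_zero] at h2
      exact h2
    · rintro ⟨y, rfl⟩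
      obtain ⟨p, rfl⟩ := AdjoinRoot.mk_surjective y
      obtain ⟨c, hc⟩ := hdg
      refine ⟨c * p, ?_⟩
      simp only [hP, LinearMap.coe_mk, AddHom.coe_mk, hL, LinearMap.mulLeft_apply, ha,
        ← _root_.map_mul]
      congr 1
      rw [hc]; ring
  have hkerP : LinearMap.ker P = Submodule.restrictScalars F (Ideal.span {e}) := by
    ext p
    simp only [LinearMap.mem_ker, hP, LinearMap.coe_mk, AddHom.coe_mk,
      Submodule.restrictScalars_mem, Ideal.mem_span_singleton]
    rw [AdjoinRoot.mk_eq_zero]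
    constructor
    · intro h
      have : d * e ∣ d * p := by rw [hfe]; exact h
      exact (mul_dvd_mul_iff_left hd0).mp this
    · rintro ⟨q, rfl⟩
      exact ⟨q, by rw [← hfe]; ring⟩
  have hfr : Module.finrank F (LinearMap.range P) = e.natDegree := by
    have e1 := (LinearMap.quotKerEquivRange P).symm
    rw [hkerP] at e1
    have e2 := Submodule.Quotient.restrictScalarsEquiv F (Ideal.span {e} : Ideal (Polynomial F))
    have e3 : LinearMap.range P ≃ₗ[F] AdjoinRoot e := e1.trans e2
    rw [e3.finrank_eq]
    exact (AdjoinRoot.powerBasis he0).finrank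
  have hpg : (pgcd g f).natDegree = d.natDegree := by
    unfold pgcd monicize
    rw [natDegree_C_mul (inv_ne_zero (leadingCoeff_ne_zero.mpr hd0))]
  rw [hrank, ← hrangeP, hfr, hpg]
  omega
end

section
/- Let F be a field with char F coprime to both n and n' (or zero), ℓ = gcd(n, n'), and g(X), g'(X) ∈ F[X]. Then gcd(g(X), X^n − 1) · gcd(g'(X), X^{n'} − 1) / gcd(g(X)g'(X), X^ℓ − 1) = gcd(g(X), (X^n − 1)/(X^ℓ − 1)) · gcd(g'(X), (X^{n'} − 1)/(X^ℓ − 1)) · gcd(g(X), g'(X), X^ℓ − 1), as an identity of polynomials in F[X] (up to units). -/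
open Polynomial Matrix

section AuxGCD

variable {α : Type*} [EuclideanDomain α] [GCDMonoid α]

lemma aux_coprime_of_sq_dvd {d h1 h2 : α} (hd : Squarefree d) (h : h1 * h2 ∣ d) :
    IsCoprime h1 h2 := by
  have h2' : gcd h1 h2 * gcd h1 h2 ∣ d :=
    (mul_dvd_mul (gcd_dvd_left _ _) (gcd_dvd_right _ _)).trans h
  exact (gcd_isUnit_iff _ _).1 (hd _ h2')

lemma aux_gcd_mul_coprime (a : α) {k m : α} (h : IsCoprime k m) :
    Associated (gcd a (k * m)) (gcd a k * gcd a m) := by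
  refine associated_of_dvd_dvd (gcd_mul_dvd_mul_gcd a k m) ?_
  have hc : IsCoprime (gcd a k) (gcd a m) :=
    (h.of_isCoprime_of_dvd_left (gcd_dvd_right a k)).of_isCoprime_of_dvd_right
      (gcd_dvd_right a m)
  exact dvd_gcd (hc.mul_dvd (gcd_dvd_left a k) (gcd_dvd_left a m))
    (mul_dvd_mul (gcd_dvd_right a k) (gcd_dvd_right a m))

lemma aux_gcd_assoc (a b d : α) :
    Associated (gcd a (gcd b d)) (gcd (gcd a d) (gcd b d)) := by
  refine associated_of_dvd_dvd ?_ ?_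
  · exact dvd_gcd (dvd_gcd (gcd_dvd_left _ _)
      ((gcd_dvd_right _ _).trans (gcd_dvd_right b d))) (gcd_dvd_right _ _)
  · exact dvd_gcd ((gcd_dvd_left _ _).trans (gcd_dvd_left a d)) (gcd_dvd_right _ _)

lemma aux_gcd_congr_right {b b' : α} (a : α) (h : Associated b b') :
    Associated (gcd a b) (gcd a b') :=
  associated_of_dvd_dvd
    (dvd_gcd (gcd_dvd_left _ _) ((gcd_dvd_right _ _).trans h.dvd))
    (dvd_gcd (gcd_dvd_left _ _) ((gcd_dvd_right _ _).trans h.symm.dvd))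

lemma aux_squarefree {d : α} (hd : Squarefree d) (a b : α) :
    Associated (gcd (a * b) d) (lcm (gcd a d) (gcd b d)) := by
  refine associated_of_dvd_dvd ?_ ?_
  · set h := gcd (a * b) d with hh
    set h1 := gcd h a with hh1
    obtain ⟨h2, h12⟩ : h1 ∣ h := gcd_dvd_left h a
    have hhd : h ∣ d := gcd_dvd_right _ _
    have h2h : h2 ∣ h := ⟨h1, by rw [h12, mul_comm]⟩
    have e2 : IsUnit (gcd h2 a) := by
      have e1 : gcd h2 a ∣ h1 := dvd_gcd ((gcd_dvd_left h2 a).trans h2h) (gcd_dvd_right h2 a)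
      have e3 : gcd h2 a * gcd h2 a ∣ d := by
        refine (mul_dvd_mul e1 (gcd_dvd_left h2 a)).trans ?_
        rw [← h12] at *
        exact hhd
      exact hd _ e3
    have hcop : IsCoprime h2 a := (gcd_isUnit_iff _ _).1 e2
    have h2b : h2 ∣ b := hcop.dvd_of_dvd_mul_left (h2h.trans (gcd_dvd_left (a * b) d))
    have h2v : h2 ∣ gcd b d := dvd_gcd h2b (h2h.trans hhd)
    have h1u : h1 ∣ gcd a d := dvd_gcd (gcd_dvd_right h a) ((gcd_dvd_left h a).trans hhd)
    have hcop12 : IsCoprime h1 h2 := aux_coprime_of_sq_dvd hd (h12 ▸ hhd)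
    have : h1 * h2 ∣ lcm (gcd a d) (gcd b d) :=
      hcop12.mul_dvd (h1u.trans (dvd_lcm_left _ _)) (h2v.trans (dvd_lcm_right _ _))
    rwa [← h12] at this
  · exact lcm_dvd
      (dvd_gcd ((gcd_dvd_left a d).trans (dvd_mul_right a b)) (gcd_dvd_right a d))
      (dvd_gcd ((gcd_dvd_left b d).trans (dvd_mul_left b a)) (gcd_dvd_right b d))

end AuxGCD

lemma monicize_associated {F : Type*} [Field F] (p : Polynomial F) :
    Associated (monicize p) p := by
  by_cases hp : p = 0
  · simp [monicize, hp]
  · exact associated_unit_mul_left _ _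
      (isUnit_C.2 (isUnit_iff_ne_zero.2 (inv_ne_zero (leadingCoeff_ne_zero.2 hp))))

lemma pgcd_associated {F : Type*} [Field F] [DecidableEq F]
    (p q : Polynomial F) : Associated (pgcd p q) (gcd p q) := by
  unfold pgcd
  rw [Subsingleton.elim (Classical.decEq F) ‹DecidableEq F›]
  refine (monicize_associated _).trans (associated_of_dvd_dvd ?_ ?_)
  · exact dvd_gcd (EuclideanDomain.gcd_dvd_left p q) (EuclideanDomain.gcd_dvd_right p q)
  · exact EuclideanDomain.dvd_gcd (gcd_dvd_left p q) (gcd_dvd_right p q)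

lemma X_pow_sub_one_dvd' {F : Type*} [Field F] {ℓ n : ℕ} (h : ℓ ∣ n) :
    (X ^ ℓ - 1 : Polynomial F) ∣ X ^ n - 1 := by
  obtain ⟨k, rfl⟩ := h
  simpa [pow_mul] using sub_dvd_pow_sub_pow (X ^ ℓ : Polynomial F) 1 k

theorem stmt_8 (F : Type*) [Field F]
    (n n' : ℕ) (hn : 0 < n) (hn' : 0 < n')
    (hchar : ringChar F = 0 ∨ Nat.Coprime (ringChar F) (n * n'))
    (g g' : Polynomial F) (ℓ : ℕ) (hℓ : ℓ = Nat.gcd n n') :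
    Associated
      (pgcd g (X ^ n - 1) * pgcd g' (X ^ n' - 1) / pgcd (g * g') (X ^ ℓ - 1))
      (pgcd g ((X ^ n - 1) / (X ^ ℓ - 1)) * pgcd g' ((X ^ n' - 1) / (X ^ ℓ - 1))
        * pgcd g (pgcd g' (X ^ ℓ - 1))) := by
  classical
  have hℓn : ℓ ∣ n := hℓ ▸ Nat.gcd_dvd_left n n'
  have hℓn' : ℓ ∣ n' := hℓ ▸ Nat.gcd_dvd_right n n'
  have hℓpos : 0 < ℓ := hℓ ▸ Nat.gcd_pos_of_pos_left n' hn
  -- cast facts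
  have hcast : ∀ m : ℕ, 0 < m → m ∣ n * n' → (m : F) ≠ 0 := by
    intro m hm hdvd hzero
    have hdvdchar : ringChar F ∣ m := (ringChar.spec F m).1 hzero
    rcases hchar with h0 | hcop
    · rw [h0] at hdvdchar
      exact hm.ne' (zero_dvd_iff.1 hdvdchar)
    · have h1 : ringChar F = 1 := hcop.eq_one_of_dvd (hdvdchar.trans hdvd)
      have := ringChar.charP F
      exact CharP.char_ne_one F (ringChar F) h1
  have hnF : (n : F) ≠ 0 := hcast n hn (Dvd.intro n' rfl)
  have hn'F : (n' : F) ≠ 0 := hcast n' hn' (Dvd.intro_left n rfl)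
  have hℓF : (ℓ : F) ≠ 0 := hcast ℓ hℓpos (hℓn.trans (Dvd.intro n' rfl))
  have sepn : (X ^ n - 1 : Polynomial F).Separable := by
    simpa using separable_X_pow_sub_C (1 : F) hnF one_ne_zero
  have sepn' : (X ^ n' - 1 : Polynomial F).Separable := by
    simpa using separable_X_pow_sub_C (1 : F) hn'F one_ne_zero
  have sepℓ : (X ^ ℓ - 1 : Polynomial F).Separable := by
    simpa using separable_X_pow_sub_C (1 : F) hℓF one_ne_zero
  have hd0 : (X ^ ℓ - 1 : Polynomial F) ≠ 0 := by
    simpa using X_pow_sub_C_ne_zero hℓpos (1 : F)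
  have hdA : (X ^ ℓ - 1 : Polynomial F) ∣ X ^ n - 1 := X_pow_sub_one_dvd' hℓn
  have hdA' : (X ^ ℓ - 1 : Polynomial F) ∣ X ^ n' - 1 := X_pow_sub_one_dvd' hℓn'
  have hqA : (X ^ ℓ - 1 : Polynomial F) * ((X ^ n - 1) / (X ^ ℓ - 1)) = X ^ n - 1 :=
    EuclideanDomain.mul_div_cancel' hd0 hdA
  have hqA' : (X ^ ℓ - 1 : Polynomial F) * ((X ^ n' - 1) / (X ^ ℓ - 1)) = X ^ n' - 1 :=
    EuclideanDomain.mul_div_cancel' hd0 hdA'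
  have copA : IsCoprime ((X ^ n - 1 : Polynomial F) / (X ^ ℓ - 1)) (X ^ ℓ - 1 : Polynomial F) := by
    rw [← hqA] at sepn
    exact sepn.isCoprime.symm
  have copA' : IsCoprime ((X ^ n' - 1 : Polynomial F) / (X ^ ℓ - 1))
      (X ^ ℓ - 1 : Polynomial F) := by
    rw [← hqA'] at sepn'
    exact sepn'.isCoprime.symm
  have sqd : Squarefree (X ^ ℓ - 1 : Polynomial F) := sepℓ.squarefree
  -- abbreviations on the GCDMonoid side
  set d : Polynomial F := X ^ ℓ - 1 with hd
  set A : Polynomial F := X ^ n - 1 with hA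
  set A' : Polynomial F := X ^ n' - 1 with hA'dn
  set u := gcd g d with hu
  set v := gcd g' d with hv
  set r1 := gcd g (A / d) with hr1d
  set r2 := gcd g' (A' / d) with hr2d
  set r3 := gcd g (gcd g' d) with hr3d
  set c := gcd (g * g') d with hcd
  have gA : Associated (gcd g A) (r1 * u) := by
    conv_lhs => rw [← hqA, mul_comm]
    exact aux_gcd_mul_coprime g copA
  have gA' : Associated (gcd g' A') (r2 * v) := by
    conv_lhs => rw [← hqA', mul_comm]
    exact aux_gcd_mul_coprime g' copA'
  have key : Associated (gcd g A * gcd g' A') (r1 * r2 * r3 * c) := by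
    have t1 : Associated (gcd g A * gcd g' A') (r1 * r2 * (u * v)) := by
      have := gA.mul_mul gA'
      rwa [mul_mul_mul_comm] at this
    have t2 : Associated (u * v) (r3 * c) := by
      refine (gcd_mul_lcm u v).symm.trans ?_
      exact ((aux_gcd_assoc g g' d).symm.mul_mul (aux_squarefree sqd g g').symm)
    have := t1.trans (Associated.mul_left (r1 * r2) t2)
    rwa [← mul_assoc] at this
  -- divisibility
  have hud : u ∣ gcd g A := dvd_gcd (gcd_dvd_left g d) ((gcd_dvd_right g d).trans hdA)
  have hvd : v ∣ gcd g' A' := dvd_gcd (gcd_dvd_left g' d) ((gcd_dvd_right g' d).trans hdA')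
  have hcab : c ∣ gcd g A * gcd g' A' :=
    ((aux_squarefree sqd g g').dvd.trans
      (lcm_dvd (hud.trans (dvd_mul_right _ _)) (hvd.trans (dvd_mul_left _ _))))
  -- transfer to pgcd
  have hPa : Associated (pgcd g A) (gcd g A) := pgcd_associated g A
  have hPb : Associated (pgcd g' A') (gcd g' A') := pgcd_associated g' A'
  have hPc : Associated (pgcd (g * g') d) c := pgcd_associated (g * g') d
  have hPr1 : Associated (pgcd g (A / d)) r1 := pgcd_associated g (A / d)
  have hPr2 : Associated (pgcd g' (A' / d)) r2 := pgcd_associated g' (A' / d)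
  have hPr3 : Associated (pgcd g (pgcd g' d)) r3 :=
    (pgcd_associated g (pgcd g' d)).trans (aux_gcd_congr_right g (pgcd_associated g' d))
  have hc0 : c ≠ 0 := fun h0 => hd0 ((gcd_eq_zero_iff _ _).1 h0).2
  have hC0 : pgcd (g * g') d ≠ 0 := by
    intro h0
    rw [h0] at hPc
    exact hc0 ((associated_zero_iff_eq_zero c).1 hPc.symm)
  have hCdvd : pgcd (g * g') d ∣ pgcd g A * pgcd g' A' :=
    hPc.dvd.trans (hcab.trans (hPa.symm.mul_mul hPb.symm).dvd)
  have hfe : pgcd (g * g') d * (pgcd g A * pgcd g' A' / pgcd (g * g') d)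
      = pgcd g A * pgcd g' A' := EuclideanDomain.mul_div_cancel' hC0 hCdvd
  have big : Associated (pgcd g A * pgcd g' A')
      ((pgcd g (A / d) * pgcd g' (A' / d) * pgcd g (pgcd g' d)) * pgcd (g * g') d) := by
    refine ((hPa.mul_mul hPb).trans key).trans ?_
    exact ((hPr1.symm.mul_mul hPr2.symm).mul_mul hPr3.symm).mul_mul hPc.symm
  refine Associated.of_mul_right ?_ (Associated.refl (pgcd (g * g') d)) hC0
  rw [mul_comm (pgcd g A * pgcd g' A' / pgcd (g * g') d), hfe]
  exact big
end

section
/- Let F be a field with char F coprime to both n and n' (or zero), ℓ = gcd(n, n'), and g(X), g'(X) ∈ F[X]. Then lcm((X^n − 1)/gcd(g(X), X^n − 1), (X^{n'} − 1)/gcd(g'(X), X^{n'} − 1)) = (X^n − 1)(X^{n'} − 1) · gcd(g(X)g'(X), X^ℓ − 1) / (gcd(g(X), X^n − 1) · gcd(g'(X), X^{n'} − 1) · (X^ℓ − 1)), up to units in F[X]. -/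
open Polynomial Matrix

section helpers

variable {F : Type*} [Field F]

lemma monicize_assoc (p : Polynomial F) (hp : p ≠ 0) : Associated (monicize p) p := by
  unfold monicize
  exact associated_unit_mul_left p _ (Polynomial.isUnit_C.2
    (isUnit_iff_ne_zero.2 (inv_ne_zero (Polynomial.leadingCoeff_ne_zero.2 hp))))

lemma egcd_assoc_add [DecidableEq (Polynomial F)] (p q t : Polynomial F) :
    Associated (EuclideanDomain.gcd p (q + t * p)) (EuclideanDomain.gcd p q) := by
  apply associated_of_dvd_dvd
  · refine EuclideanDomain.dvd_gcd (EuclideanDomain.gcd_dvd_left _ _) ?_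
    have h1 := EuclideanDomain.gcd_dvd_left p (q + t * p)
    have h2 := EuclideanDomain.gcd_dvd_right p (q + t * p)
    have h3 := dvd_sub h2 (h1.mul_left t)
    simpa using h3
  · refine EuclideanDomain.dvd_gcd (EuclideanDomain.gcd_dvd_left _ _) ?_
    exact dvd_add (EuclideanDomain.gcd_dvd_right p q)
      ((EuclideanDomain.gcd_dvd_left p q).mul_left t)

lemma egcd_assoc_comm [DecidableEq (Polynomial F)] (p q : Polynomial F) :
    Associated (EuclideanDomain.gcd p q) (EuclideanDomain.gcd q p) :=
  associated_of_dvd_dvd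
    (EuclideanDomain.dvd_gcd (EuclideanDomain.gcd_dvd_right _ _) (EuclideanDomain.gcd_dvd_left _ _))
    (EuclideanDomain.dvd_gcd (EuclideanDomain.gcd_dvd_right _ _) (EuclideanDomain.gcd_dvd_left _ _))

lemma X_pow_sub_one_dvd_of_dvd {m k : ℕ} (h : m ∣ k) :
    ((X : Polynomial F) ^ m - 1) ∣ (X ^ k - 1) := by
  obtain ⟨t, rfl⟩ := h
  have : (X : Polynomial F) ^ (m * t) - 1 = (X ^ m) ^ t - 1 ^ t := by
    rw [← pow_mul, one_pow]
  rw [this]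
  exact sub_dvd_pow_sub_pow _ _ _

lemma egcd_X_pow_sub_one [DecidableEq (Polynomial F)] :
    ∀ m n : ℕ, Associated (EuclideanDomain.gcd ((X : Polynomial F) ^ m - 1) (X ^ n - 1))
      ((X : Polynomial F) ^ (Nat.gcd m n) - 1) := by
  intro m
  induction m using Nat.strong_induction_on with
  | _ m ih =>
    intro n
    rcases Nat.eq_zero_or_pos m with rfl | hm
    · simp only [pow_zero, sub_self, EuclideanDomain.gcd_zero_left, Nat.gcd_zero_left]
      exact Associated.refl _
    · obtain ⟨s, hs⟩ : ((X : Polynomial F) ^ m - 1) ∣ (X ^ (m * (n / m)) - 1) :=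
        X_pow_sub_one_dvd_of_dvd (Dvd.intro _ rfl)
      have key : (X : Polynomial F) ^ n - 1 =
          (X ^ (n % m) - 1) + (X ^ (n % m) * s) * (X ^ m - 1) := by
        have h1 : (X : Polynomial F) ^ n = X ^ (n % m) * X ^ (m * (n / m)) := by
          rw [← pow_add]
          congr 1
          exact (Nat.mod_add_div n m).symm
        calc (X : Polynomial F) ^ n - 1
            = (X ^ (n % m) - 1) + X ^ (n % m) * (X ^ (m * (n / m)) - 1) := by
              rw [h1]; ring
          _ = (X ^ (n % m) - 1) + (X ^ (n % m) * s) * (X ^ m - 1) := by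
              rw [hs]; ring
      have st1 : Associated (EuclideanDomain.gcd ((X : Polynomial F) ^ m - 1) (X ^ n - 1))
          (EuclideanDomain.gcd ((X : Polynomial F) ^ m - 1) (X ^ (n % m) - 1)) := by
        rw [key]; exact egcd_assoc_add _ _ _
      have st2 := egcd_assoc_comm ((X : Polynomial F) ^ m - 1) (X ^ (n % m) - 1)
      have st3 := ih (n % m) (Nat.mod_lt _ hm) m
      rw [Nat.gcd_rec]
      exact (st1.trans st2).trans st3

lemma sqf_X_pow_sub_one {m : ℕ} (hm : (m : F) ≠ 0) :
    Squarefree ((X : Polynomial F) ^ m - 1) := by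
  have h := Polynomial.separable_X_pow_sub_C (1 : F) hm one_ne_zero
  rw [Polynomial.C_1] at h
  exact h.squarefree

lemma isCoprime_of_squarefree_mul {p q : Polynomial F} (h : Squarefree (p * q)) :
    IsCoprime p q := by
  classical
  rw [← EuclideanDomain.gcd_isUnit_iff]
  exact h _ (mul_dvd_mul (EuclideanDomain.gcd_dvd_left p q) (EuclideanDomain.gcd_dvd_right p q))

set_option maxHeartbeats 1000000 in
lemma master (P Q D g g' : Polynomial F)
    (hP0 : P ≠ 0) (hQ0 : Q ≠ 0) (hD0 : D ≠ 0)
    (hsP : Squarefree P) (hsQ : Squarefree Q) (hsD : Squarefree D)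
    (hDP : D ∣ P) (hDQ : D ∣ Q)
    (hPQD : ∀ w : Polynomial F, w ∣ P → w ∣ Q → w ∣ D) :
    Associated (plcm (P / pgcd g P) (Q / pgcd g' Q))
      (P * Q * pgcd (g * g') D / (pgcd g P * pgcd g' Q * D)) := by
  letI := Classical.decEq F
  have hga0 : EuclideanDomain.gcd g P ≠ 0 :=
    fun h => hP0 (EuclideanDomain.gcd_eq_zero_iff.mp h).2
  have hgb0 : EuclideanDomain.gcd g' Q ≠ 0 :=
    fun h => hQ0 (EuclideanDomain.gcd_eq_zero_iff.mp h).2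
  have hgc0 : EuclideanDomain.gcd (g * g') D ≠ 0 :=
    fun h => hD0 (EuclideanDomain.gcd_eq_zero_iff.mp h).2
  have haa : Associated (pgcd g P) (EuclideanDomain.gcd g P) := monicize_assoc _ hga0
  have hbb : Associated (pgcd g' Q) (EuclideanDomain.gcd g' Q) := monicize_assoc _ hgb0
  have hcc : Associated (pgcd (g * g') D) (EuclideanDomain.gcd (g * g') D) :=
    monicize_assoc _ hgc0
  set a := pgcd g P with hadef
  set b := pgcd g' Q with hbdef
  set c := pgcd (g * g') D with hcdef
  have ha0 : a ≠ 0 := haa.ne_zero_iff.mpr hga0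
  have hb0 : b ≠ 0 := hbb.ne_zero_iff.mpr hgb0
  have hc0 : c ≠ 0 := hcc.ne_zero_iff.mpr hgc0
  have hag : a ∣ g := haa.dvd.trans (EuclideanDomain.gcd_dvd_left _ _)
  have haP : a ∣ P := haa.dvd.trans (EuclideanDomain.gcd_dvd_right _ _)
  have hbg : b ∣ g' := hbb.dvd.trans (EuclideanDomain.gcd_dvd_left _ _)
  have hbQ : b ∣ Q := hbb.dvd.trans (EuclideanDomain.gcd_dvd_right _ _)
  have hcg : c ∣ g * g' := hcc.dvd.trans (EuclideanDomain.gcd_dvd_left _ _)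
  have hcD : c ∣ D := hcc.dvd.trans (EuclideanDomain.gcd_dvd_right _ _)
  set A := P / a with hAdef
  set B := Q / b with hBdef
  set e := D / c with hedef
  have hPa : a * A = P := EuclideanDomain.mul_div_cancel' ha0 haP
  have hQb : b * B = Q := EuclideanDomain.mul_div_cancel' hb0 hbQ
  have hDc : c * e = D := EuclideanDomain.mul_div_cancel' hc0 hcD
  have hA0 : A ≠ 0 := fun h => hP0 (by rw [← hPa, h, mul_zero])
  have hB0 : B ≠ 0 := fun h => hQ0 (by rw [← hQb, h, mul_zero])
  have he0 : e ≠ 0 := fun h => hD0 (by rw [← hDc, h, mul_zero])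
  have hAP : A ∣ P := ⟨a, by rw [← hPa]; ring⟩
  have hBQ : B ∣ Q := ⟨b, by rw [← hQb]; ring⟩
  have heD : e ∣ D := ⟨c, by rw [← hDc]; ring⟩
  have hcop_aA : IsCoprime a A := isCoprime_of_squarefree_mul (hPa ▸ hsP)
  have hcop_bB : IsCoprime b B := isCoprime_of_squarefree_mul (hQb ▸ hsQ)
  have hcop_ce : IsCoprime c e := isCoprime_of_squarefree_mul (hDc ▸ hsD)
  -- Claim 1 : e divides A and B
  have hcop_ea : IsCoprime e a := by
    rw [← EuclideanDomain.gcd_isUnit_iff]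
    have hv1 := EuclideanDomain.gcd_dvd_left e a
    have hv2 := EuclideanDomain.gcd_dvd_right e a
    have hvc : EuclideanDomain.gcd e a ∣ c :=
      (EuclideanDomain.dvd_gcd (hv2.trans (hag.trans (dvd_mul_right g g')))
        (hv1.trans heD)).trans hcc.symm.dvd
    exact hcop_ce.isUnit_of_dvd' hvc hv1
  have hcop_eb : IsCoprime e b := by
    rw [← EuclideanDomain.gcd_isUnit_iff]
    have hv1 := EuclideanDomain.gcd_dvd_left e b
    have hv2 := EuclideanDomain.gcd_dvd_right e b
    have hvc : EuclideanDomain.gcd e b ∣ c :=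
      (EuclideanDomain.dvd_gcd (hv2.trans (hbg.trans (dvd_mul_left g' g)))
        (hv1.trans heD)).trans hcc.symm.dvd
    exact hcop_ce.isUnit_of_dvd' hvc hv1
  have heA : e ∣ A := by
    have h : e ∣ a * A := hPa ▸ (heD.trans hDP)
    exact hcop_ea.dvd_of_dvd_mul_left h
  have heB : e ∣ B := by
    have h : e ∣ b * B := hQb ▸ (heD.trans hDQ)
    exact hcop_eb.dvd_of_dvd_mul_left h
  -- Claim 2 : gcd A B divides e
  have hwA : EuclideanDomain.gcd A B ∣ A := EuclideanDomain.gcd_dvd_left _ _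
  have hwB : EuclideanDomain.gcd A B ∣ B := EuclideanDomain.gcd_dvd_right _ _
  have hwD : EuclideanDomain.gcd A B ∣ D :=
    hPQD _ (hwA.trans hAP) (hwB.trans hBQ)
  have hwg : IsCoprime (EuclideanDomain.gcd A B) g := by
    rw [← EuclideanDomain.gcd_isUnit_iff]
    have hv1 := EuclideanDomain.gcd_dvd_left (EuclideanDomain.gcd A B) g
    have hv2 := EuclideanDomain.gcd_dvd_right (EuclideanDomain.gcd A B) g
    have hva : EuclideanDomain.gcd (EuclideanDomain.gcd A B) g ∣ a :=
      (EuclideanDomain.dvd_gcd hv2 (hv1.trans (hwA.trans hAP))).trans haa.symm.dvd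
    exact hcop_aA.isUnit_of_dvd' hva (hv1.trans hwA)
  have hwg' : IsCoprime (EuclideanDomain.gcd A B) g' := by
    rw [← EuclideanDomain.gcd_isUnit_iff]
    have hv1 := EuclideanDomain.gcd_dvd_left (EuclideanDomain.gcd A B) g'
    have hv2 := EuclideanDomain.gcd_dvd_right (EuclideanDomain.gcd A B) g'
    have hvb : EuclideanDomain.gcd (EuclideanDomain.gcd A B) g' ∣ b :=
      (EuclideanDomain.dvd_gcd hv2 (hv1.trans (hwB.trans hBQ))).trans hbb.symm.dvd
    exact hcop_bB.isUnit_of_dvd' hvb (hv1.trans hwB)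
  have hwc : IsCoprime (EuclideanDomain.gcd A B) c :=
    (hwg.mul_right hwg').of_isCoprime_of_dvd_right hcg
  have hwe : EuclideanDomain.gcd A B ∣ e := by
    have h : EuclideanDomain.gcd A B ∣ c * e := hDc ▸ hwD
    exact hwc.dvd_of_dvd_mul_left h
  have hew : Associated (EuclideanDomain.gcd A B) e :=
    associated_of_dvd_dvd hwe (EuclideanDomain.dvd_gcd heA heB)
  -- assemble
  have hden0 : a * b * D ≠ 0 := mul_ne_zero (mul_ne_zero ha0 hb0) hD0
  obtain ⟨A', hA'⟩ := heA
  have hdvd : a * b * D ∣ P * Q * c :=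
    ⟨A' * B, by rw [← hPa, ← hQb, ← hDc, hA']; ring⟩
  have key := EuclideanDomain.mul_div_cancel' hden0 hdvd
  have hmain : e * (P * Q * c / (a * b * D)) = A * B := by
    have h1 : (a * b * c) * (e * (P * Q * c / (a * b * D)))
        = (a * b * c) * (A * B) := by
      calc (a * b * c) * (e * (P * Q * c / (a * b * D)))
          = (a * b * D) * (P * Q * c / (a * b * D)) := by rw [← hDc]; ring
        _ = P * Q * c := key
        _ = (a * b * c) * (A * B) := by rw [← hPa, ← hQb]; ring
    exact mul_left_cancel₀ (mul_ne_zero (mul_ne_zero ha0 hb0) hc0) h1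
  have hlg : EuclideanDomain.gcd A B * EuclideanDomain.lcm A B = A * B :=
    EuclideanDomain.gcd_mul_lcm A B
  have hassoc : Associated (e * (P * Q * c / (a * b * D)))
      (EuclideanDomain.gcd A B * EuclideanDomain.lcm A B) := by
    rw [hmain, hlg]
  have hRL : Associated (P * Q * c / (a * b * D)) (EuclideanDomain.lcm A B) :=
    Associated.of_mul_left hassoc hew.symm he0
  have hlcm0 : EuclideanDomain.lcm A B ≠ 0 := by
    rw [Ne, EuclideanDomain.lcm_eq_zero_iff]
    exact fun h => h.elim hA0 hB0
  exact (monicize_assoc _ hlcm0).trans hRL.symm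

end helpers

theorem stmt_9 (F : Type*) [Field F]
    (n n' : ℕ) (hn : 0 < n) (hn' : 0 < n')
    (hchar : ringChar F = 0 ∨ Nat.Coprime (ringChar F) (n * n'))
    (g g' : Polynomial F) (ℓ : ℕ) (hℓ : ℓ = Nat.gcd n n') :
    Associated
      (plcm ((X ^ n - 1) / pgcd g (X ^ n - 1))
            ((X ^ n' - 1) / pgcd g' (X ^ n' - 1)))
      ((X ^ n - 1) * (X ^ n' - 1) * pgcd (g * g') (X ^ ℓ - 1)
        / (pgcd g (X ^ n - 1) * pgcd g' (X ^ n' - 1) * (X ^ ℓ - 1))) := by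
  classical
  have hℓpos : 0 < ℓ := hℓ ▸ Nat.gcd_pos_of_pos_left n' hn
  have hcast : ∀ m : ℕ, 0 < m → m ∣ n * n' → (m : F) ≠ 0 := by
    intro m hm hdvd h0
    have hr : ringChar F ∣ m := ringChar.dvd h0
    rcases hchar with h | h
    · rw [h] at hr
      exact absurd (Nat.eq_zero_of_zero_dvd hr) (by omega)
    · have h1 : ringChar F = 1 := Nat.Coprime.eq_one_of_dvd h (hr.trans hdvd)
      haveI := ringChar.charP F
      exact CharP.char_ne_one (R := F) (ringChar F) h1
  have hne : ∀ m : ℕ, 0 < m → ((X : Polynomial F) ^ m - 1) ≠ 0 := by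
    intro m hm
    have h := Polynomial.monic_X_pow_sub_C (1 : F) hm.ne'
    rw [Polynomial.C_1] at h
    exact h.ne_zero
  have hℓdvd : ℓ ∣ n * n' := hℓ ▸ ((Nat.gcd_dvd_left n n').trans (dvd_mul_right n n'))
  refine master _ _ _ g g' (hne n hn) (hne n' hn') (hne ℓ hℓpos)
    (sqf_X_pow_sub_one (hcast n hn (dvd_mul_right n n')))
    (sqf_X_pow_sub_one (hcast n' hn' (dvd_mul_left n' n)))
    (sqf_X_pow_sub_one (hcast ℓ hℓpos hℓdvd))
    (X_pow_sub_one_dvd_of_dvd (hℓ ▸ Nat.gcd_dvd_left n n'))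
    (X_pow_sub_one_dvd_of_dvd (hℓ ▸ Nat.gcd_dvd_right n n'))
    ?_
  intro w hwP hwQ
  refine (EuclideanDomain.dvd_gcd hwP hwQ).trans ?_
  rw [hℓ]
  exact (egcd_X_pow_sub_one n n').dvd
end

section
/- With F, n, n', g, g', ℓ, d, r as in the rank theorem for double circulant matrices (r = min{m, n + n' − d}), the first r rows of M(g,g')_{m×(n+n')} are linearly independent. -/
open Polynomial Matrix

section Aux
variable {F : Type*} [Field F]

noncomputable local instance fieldNormalizationMonoid : NormalizationMonoid F where
  normUnit x := open scoped Classical in if h : x = 0 then 1 else (Units.mk0 x h)⁻¹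
  normUnit_zero := by simp
  normUnit_one := by simp
  normUnit_mul_units := by
    intro a u ha
    ext
    simp [ha, u.ne_zero, mul_inv, mul_comm]

/-- squarefree divisor domination via prime divisors -/
theorem sqf_dvd_of_primes {u a b : Polynomial F} (hu : Squarefree u)
    (hau : a ∣ u) (hbu : b ∣ u)
    (hab : ∀ q : Polynomial F, Prime q → q ∣ a → q ∣ b) : a ∣ b := by
  classical
  have hu0 : u ≠ 0 := hu.ne_zero
  have ha0 : a ≠ 0 := ne_zero_of_dvd_ne_zero hu0 hau
  have hb0 : b ≠ 0 := ne_zero_of_dvd_ne_zero hu0 hbu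
  have hasf : Squarefree a := hu.squarefree_of_dvd hau
  rw [UniqueFactorizationMonoid.dvd_iff_normalizedFactors_le_normalizedFactors ha0 hb0]
  rw [Multiset.le_iff_subset ((UniqueFactorizationMonoid.squarefree_iff_nodup_normalizedFactors ha0).1 hasf)]
  intro q hq
  have hqp : Prime q := UniqueFactorizationMonoid.prime_of_normalized_factor q hq
  have hqa : q ∣ a := UniqueFactorizationMonoid.dvd_of_mem_normalizedFactors hq
  have hqb : q ∣ b := hab q hqp hqa
  obtain ⟨w, hw, hqw⟩ :=
    UniqueFactorizationMonoid.exists_mem_normalizedFactors_of_dvd hb0 hqp.irreducible hqb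
  have : q = w := by
    have h1 := UniqueFactorizationMonoid.normalize_normalized_factor q hq
    have h2 := UniqueFactorizationMonoid.normalize_normalized_factor w hw
    exact hqw.eq_of_normalized h1 h2
  rwa [this]

end Aux
local notation "egcd" => EuclideanDomain.gcd

section EDAux
variable {R : Type*} [EuclideanDomain R] [DecidableEq R]

theorem my_isCoprime_div_gcd {a b : R} (h : egcd a b ≠ 0) :
    IsCoprime (a / egcd a b) (b / egcd a b) := by
  set G := egcd a b with hG
  have ha : G * (a / G) = a := EuclideanDomain.mul_div_cancel' h (EuclideanDomain.gcd_dvd_left a b)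
  have hb : G * (b / G) = b := EuclideanDomain.mul_div_cancel' h (EuclideanDomain.gcd_dvd_right a b)
  have hbez : G = a * EuclideanDomain.gcdA a b + b * EuclideanDomain.gcdB a b := EuclideanDomain.gcd_eq_gcd_ab a b
  refine ⟨EuclideanDomain.gcdA a b, EuclideanDomain.gcdB a b, ?_⟩
  apply mul_left_cancel₀ h
  rw [mul_one]
  have e : G * (EuclideanDomain.gcdA a b * (a / G) + EuclideanDomain.gcdB a b * (b / G))
      = EuclideanDomain.gcdA a b * (G * (a / G)) + EuclideanDomain.gcdB a b * (G * (b / G)) := by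
    ring
  rw [e, ha, hb, hbez]
  ring

theorem my_dvd_of_dvd_mul {s p g : R} (hs : s ≠ 0) (hdvd : s ∣ p * g) :
    s / egcd g s ∣ p := by
  set a := egcd g s with ha
  have ha0 : a ≠ 0 := fun h => hs ((EuclideanDomain.gcd_eq_zero_iff.1 h).2)
  have hg : a * (g / a) = g := EuclideanDomain.mul_div_cancel' ha0 (EuclideanDomain.gcd_dvd_left g s)
  have hs' : a * (s / a) = s := EuclideanDomain.mul_div_cancel' ha0 (EuclideanDomain.gcd_dvd_right g s)
  have hcop : IsCoprime (g / a) (s / a) := my_isCoprime_div_gcd ha0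
  have h1 : a * (s / a) ∣ a * (p * (g / a)) := by
    rw [hs']
    have e : a * (p * (g / a)) = p * g := by
      conv_rhs => rw [← hg]
      ring
    rwa [e]
  have h2 : s / a ∣ p * (g / a) := (mul_dvd_mul_iff_left ha0).1 h1
  exact hcop.symm.dvd_of_dvd_mul_right h2

theorem my_lcm_dvd {h h' p : R} (hh : h ≠ 0) (hh' : h' ≠ 0)
    (h1 : h ∣ p) (h2 : h' ∣ p) : h * (h' / egcd h h') ∣ p := by
  set G := egcd h h' with hG
  have hG0 : G ≠ 0 := fun hz => hh (EuclideanDomain.gcd_eq_zero_iff.1 hz).1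
  have e1 : G * (h / G) = h := EuclideanDomain.mul_div_cancel' hG0 (EuclideanDomain.gcd_dvd_left h h')
  have e2 : G * (h' / G) = h' := EuclideanDomain.mul_div_cancel' hG0 (EuclideanDomain.gcd_dvd_right h h')
  have hcop : IsCoprime (h / G) (h' / G) := my_isCoprime_div_gcd hG0
  obtain ⟨q, hq⟩ := h1
  have : G * (h' / G) ∣ G * ((h / G) * q) := by
    rw [e2, mul_comm (h/G) q, ← mul_assoc, mul_comm G q, mul_assoc, e1, mul_comm q h, ← hq]
    exact h2
  have h3 : h' / G ∣ (h / G) * q := (mul_dvd_mul_iff_left hG0).1 this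
  have h4 : h' / G ∣ q := hcop.symm.dvd_of_dvd_mul_left h3
  obtain ⟨w, hw⟩ := h4
  exact ⟨w, by rw [hq, hw]; ring⟩

theorem my_prime_dvd_div {u t : R} (hu : Squarefree u) (ht : t ∣ u)
    {q : R} (hq : Prime q) : q ∣ u / t ↔ q ∣ u ∧ ¬ q ∣ t := by
  have hu0 : u ≠ 0 := hu.ne_zero
  have ht0 : t ≠ 0 := ne_zero_of_dvd_ne_zero hu0 ht
  have key : t * (u / t) = t * (u / t) := rfl
  have e : t * (u / t) = u := EuclideanDomain.mul_div_cancel' ht0 ht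
  constructor
  · intro hqd
    refine ⟨dvd_trans hqd ⟨t, by rw [mul_comm (u / t) t]; exact e.symm⟩, fun hqt => ?_⟩
    have : q * q ∣ u := by rw [← e]; exact mul_dvd_mul hqt hqd
    exact hq.not_unit (hu q this)
  · rintro ⟨h1, h2⟩
    have : q ∣ t * (u / t) := by rwa [e]
    rcases hq.dvd_mul.1 this with h | h
    · exact absurd h h2
    · exact h

theorem my_prime_dvd_gcd_iff {a b : R} {q : R} :
    q ∣ egcd a b ↔ q ∣ a ∧ q ∣ b :=
  ⟨fun h => ⟨h.trans (EuclideanDomain.gcd_dvd_left a b), h.trans (EuclideanDomain.gcd_dvd_right a b)⟩,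
   fun ⟨h1, h2⟩ =>EuclideanDomain.dvd_gcd h1 h2⟩

end EDAux

section XPow
variable {F : Type*} [Field F]

theorem dvd_X_pow_sub_one_of_dvd {a b : ℕ} (h : a ∣ b) :
    (X ^ a - 1 : Polynomial F) ∣ X ^ b - 1 := by
  obtain ⟨k, rfl⟩ := h
  have := sub_dvd_pow_sub_pow (X ^ a : Polynomial F) 1 k
  simpa [← pow_mul, one_pow] using this

theorem dvd_gcd_X_pow_sub_one (a b : ℕ) (q : Polynomial F) :
    (q ∣ X ^ a - 1 ∧ q ∣ X ^ b - 1) ↔ q ∣ X ^ (Nat.gcd a b) - 1 := by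
  induction a using Nat.strong_induction_on generalizing b q with
  | _ a IH =>
    rcases Nat.eq_zero_or_pos a with rfl | ha
    · simp [Nat.gcd_zero_left]
    · rw [Nat.gcd_rec a b]
      have key : (X ^ (b % a) - 1 : Polynomial F)
          = (X ^ b - 1) - X ^ (b % a) * (X ^ (a * (b / a)) - 1) := by
        rw [mul_sub, ← pow_add, mul_one]
        rw [Nat.mod_add_div b a]
        ring
      have hdv : (X ^ a - 1 : Polynomial F) ∣ X ^ (a * (b / a)) - 1 :=
        dvd_X_pow_sub_one_of_dvd ⟨b / a, rfl⟩
      rw [← IH (b % a) (Nat.mod_lt b ha) a q]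
      constructor
      · rintro ⟨h1, h2⟩
        refine ⟨?_, h1⟩
        rw [key]
        exact dvd_sub h2 (Dvd.dvd.mul_left (h1.trans hdv) _)
      · rintro ⟨h1, h2⟩
        refine ⟨h2, ?_⟩
        have : (X ^ b - 1 : Polynomial F)
            = (X ^ (b % a) - 1) + X ^ (b % a) * (X ^ (a * (b / a)) - 1) := by
          rw [key]; ring
        rw [this]
        exact dvd_add h1 (Dvd.dvd.mul_left (h2.trans hdv) _)

end XPow

section Rot
variable {F : Type*} [Field F]

noncomputable def rotP (g : Polynomial F) (n i : ℕ) : Polynomial F :=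
  ∑ k ∈ Finset.range n, monomial k (g.coeff ((k + (n - 1) * i) % n))

theorem rotP_coeff (g : Polynomial F) (n i k : ℕ) :
    (rotP g n i).coeff k = if k < n then g.coeff ((k + (n - 1) * i) % n) else 0 := by
  rw [rotP, finset_sum_coeff]
  simp only [coeff_monomial]
  rw [Finset.sum_ite_eq' (Finset.range n) k]
  simp [Finset.mem_range]

theorem rotP_zero (g : Polynomial F) {n : ℕ} (hn : 0 < n) (hg : g.natDegree < n) :
    rotP g n 0 = g := by
  ext k
  rw [rotP_coeff]
  split_ifs with h
  · rw [Nat.mul_zero, Nat.add_zero, Nat.mod_eq_of_lt h]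
  · rw [coeff_eq_zero_of_natDegree_lt (lt_of_lt_of_le hg (le_of_not_gt h))]

theorem rotP_succ (g : Polynomial F) {n : ℕ} (hn : 0 < n) (i : ℕ) :
    X * rotP g n i = rotP g n (i + 1)
      + C (g.coeff (((n - 1) * (i + 1)) % n)) * (X ^ n - 1) := by
  have harith : ∀ k : ℕ, (k + 1 + (n - 1) * (i + 1)) % n = (k + (n - 1) * i) % n := by
    intro k
    have h1 : (n - 1) * (i + 1) = (n - 1) * i + (n - 1) := by ring
    have h2 : k + 1 + (n - 1) * (i + 1) = (k + (n - 1) * i) + n := by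
      rw [h1]; omega
    rw [h2, Nat.add_mod_right]
  ext k
  cases k with
  | zero =>
    rw [coeff_add, rotP_coeff, coeff_C_mul, coeff_sub, coeff_X_pow, coeff_one]
    have h0 : ((X : Polynomial F) * rotP g n i).coeff 0 = 0 := by
      rw [mul_coeff_zero, coeff_X_zero, zero_mul]
    rw [h0, if_pos hn, Nat.zero_add, if_neg (by omega : ¬ (0 = n))]
    simp
  | succ k =>
    rw [coeff_X_mul, coeff_add, rotP_coeff, rotP_coeff, coeff_C_mul, coeff_sub,
      coeff_X_pow, coeff_one]
    rcases lt_trichotomy (k + 1) n with h | h | h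
    · rw [if_pos h, if_pos (by omega : k < n), harith k]
      rw [if_neg (by omega : ¬ (k + 1 = n)), if_neg (by omega : ¬ (k + 1) = 0)]
      ring
    · rw [if_neg (by omega : ¬ k + 1 < n), if_pos (by omega : k < n)]
      rw [if_pos (by omega : k + 1 = n), if_neg (by omega : ¬ (k + 1) = 0)]
      have : (k + (n - 1) * i) % n = ((n - 1) * (i + 1)) % n := by
        have h1 : (n - 1) * (i + 1) = (n - 1) * i + (n - 1) := by ring
        have h2 : k = n - 1 := by omega
        rw [h1, h2, Nat.add_comm]
      rw [this]
      ring
    · rw [if_neg (by omega : ¬ k + 1 < n), if_neg (by omega : ¬ k < n)]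
      rw [if_neg (by omega : ¬ (k + 1 = n)), if_neg (by omega : ¬ (k + 1) = 0)]
      ring

theorem X_pow_sub_one_dvd_rot (g : Polynomial F) {n : ℕ} (hn : 0 < n)
    (hg : g.natDegree < n) (i : ℕ) :
    (X ^ n - 1 : Polynomial F) ∣ X ^ i * g - rotP g n i := by
  induction i with
  | zero => simp [pow_zero, one_mul, rotP_zero g hn hg, sub_self]
  | succ i IH =>
    have key : X ^ (i + 1) * g - rotP g n (i + 1)
        = X * (X ^ i * g - rotP g n i)
          + C (g.coeff (((n - 1) * (i + 1)) % n)) * (X ^ n - 1) := by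
      have := rotP_succ g hn i
      rw [mul_sub]
      rw [show (X : Polynomial F) * (X ^ i * g) = X ^ (i+1) * g by ring]
      rw [this]
      ring
    rw [key]
    exact dvd_add (Dvd.dvd.mul_left IH X) (Dvd.intro_left _ rfl)

end Rot


section P4
variable {F : Type*} [Field F]

theorem dvd_of_colsums {r n : ℕ} (hn : 0 < n) (g : Polynomial F)
    (hg : g.natDegree < n) (c : Fin r → F)
    (hyp : ∀ k : Fin n, ∑ i : Fin r, c i * g.coeff ((k.1 + (n - 1) * i.1) % n) = 0) :
    (X ^ n - 1 : Polynomial F) ∣ (∑ i : Fin r, C (c i) * X ^ (i.1)) * g := by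
  have h1 : (∑ i : Fin r, C (c i) * X ^ (i.1)) * g
      = ∑ i : Fin r, C (c i) * (X ^ (i.1) * g) := by
    rw [Finset.sum_mul]
    exact Finset.sum_congr rfl fun i _ => by ring
  have h2 : (∑ i : Fin r, C (c i) * rotP g n i.1) = 0 := by
    have e : ∀ i : Fin r, C (c i) * rotP g n i.1
        = ∑ k ∈ Finset.range n, monomial k (c i * g.coeff ((k + (n - 1) * i.1) % n)) := by
      intro i
      rw [rotP, Finset.mul_sum]
      exact Finset.sum_congr rfl fun k _ => C_mul_monomial
    rw [Finset.sum_congr rfl fun i _ => e i, Finset.sum_comm]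
    refine Finset.sum_eq_zero fun k hk => ?_
    rw [← map_sum (monomial k)]
    rw [show (∑ i : Fin r, c i * g.coeff ((k + (n - 1) * i.1) % n)) = 0 from
      hyp ⟨k, Finset.mem_range.1 hk⟩]
    exact map_zero _
  have h3 : (X ^ n - 1 : Polynomial F)
      ∣ ∑ i : Fin r, C (c i) * (X ^ (i.1) * g - rotP g n i.1) :=
    Finset.dvd_sum fun i _ => Dvd.dvd.mul_left (X_pow_sub_one_dvd_rot g hn hg i.1) _
  have h4 : (∑ i : Fin r, C (c i) * (X ^ (i.1) * g - rotP g n i.1))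
      = (∑ i : Fin r, C (c i) * (X ^ (i.1) * g)) - ∑ i : Fin r, C (c i) * rotP g n i.1 := by
    rw [← Finset.sum_sub_distrib]
    exact Finset.sum_congr rfl fun i _ => by ring
  rw [h4, h2, sub_zero, ← h1] at h3
  exact h3

theorem monicize_ne_zero {x : Polynomial F} (hx : x ≠ 0) : monicize x ≠ 0 := by
  unfold monicize
  exact mul_ne_zero (by simp [leadingCoeff_ne_zero.2 hx]) hx

theorem monicize_natDegree {x : Polynomial F} (hx : x ≠ 0) :
    (monicize x).natDegree = x.natDegree :=
  natDegree_C_mul (inv_ne_zero (leadingCoeff_ne_zero.2 hx))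

theorem monicize_dvd (x : Polynomial F) : monicize x ∣ x := by
  rcases eq_or_ne x 0 with rfl | hx
  · simp [monicize]
  · exact (Associated.symm ⟨(isUnit_C.2 (isUnit_iff_ne_zero.2
      (inv_ne_zero (leadingCoeff_ne_zero.2 hx)))).unit, by simp [monicize, mul_comm]⟩).dvd

theorem dvd_monicize (x : Polynomial F) : x ∣ monicize x := by
  exact Dvd.dvd.mul_left dvd_rfl _

theorem cast_ne_zero_of_char {n n' k : ℕ}
    (hchar : ringChar F = 0 ∨ Nat.Coprime (ringChar F) (n * n'))
    (hk : 0 < k) (hkd : k ∣ n * n') : (k : F) ≠ 0 := by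
  intro h0
  have hch : ringChar F ∣ k := (CharP.cast_eq_zero_iff F (ringChar F) k).1 h0
  rcases hchar with h | h
  · rw [h, zero_dvd_iff] at hch
    omega
  · have h1 : ringChar F ∣ Nat.gcd (ringChar F) (n * n') :=
      Nat.dvd_gcd dvd_rfl (hch.trans hkd)
    rw [Nat.Coprime] at h
    rw [h, Nat.dvd_one] at h1
    exact CharP.char_ne_one F (ringChar F) h1

end P4


section MainProof
variable {F : Type*} [Field F]

theorem pgcd_eq (p q : Polynomial F) :
    pgcd p q = monicize (letI := Classical.decEq F; EuclideanDomain.gcd p q) := rfl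

end MainProof

theorem stmt_12 (F : Type*) [Field F]
    (m n n' : ℕ) (hm : 0 < m) (hn : 0 < n) (hn' : 0 < n')
    (hchar : ringChar F = 0 ∨ Nat.Coprime (ringChar F) (n * n'))
    (g g' : Polynomial F) (hg : g.degree < n) (hg' : g'.degree < n')
    (ℓ : ℕ) (hℓ : ℓ = Nat.gcd n n')
    (d : ℕ)
    (hd : d = (pgcd g (X ^ n - 1) * pgcd g' (X ^ n' - 1) * (X ^ ℓ - 1)
                / pgcd (g * g') (X ^ ℓ - 1)).natDegree)
    (r : ℕ) (hr : r = min m (n + n' - d)) :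
    LinearIndependent F
      (fun t : Fin r =>
        Matrix.fromCols (circMat F m n g) (circMat F m n' g') ⟨t.1, by omega⟩) := by
  letI := Classical.decEq F
  have hgnat : g.natDegree < n := by
    rcases eq_or_ne g 0 with rfl | h0
    · simpa using hn
    · exact (natDegree_lt_iff_degree_lt h0).2 hg
  have hg'nat : g'.natDegree < n' := by
    rcases eq_or_ne g' 0 with rfl | h0
    · simpa using hn'
    · exact (natDegree_lt_iff_degree_lt h0).2 hg'
  set s : Polynomial F := X ^ n - 1 with hs
  set s' : Polynomial F := X ^ n' - 1 with hs'
  set u : Polynomial F := X ^ ℓ - 1 with hu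
  have hℓpos : 0 < ℓ := by rw [hℓ]; exact Nat.gcd_pos_of_pos_left _ hn
  have hs0 : s ≠ 0 := by have := X_pow_sub_C_ne_zero hn (1 : F); rwa [C_1] at this
  have hs'0 : s' ≠ 0 := by have := X_pow_sub_C_ne_zero hn' (1 : F); rwa [C_1] at this
  have hu0 : u ≠ 0 := by have := X_pow_sub_C_ne_zero hℓpos (1 : F); rwa [C_1] at this
  have hsdeg : s.natDegree = n := by
    have := natDegree_X_pow_sub_C (n := n) (r := (1 : F)); rwa [C_1] at this
  have hs'deg : s'.natDegree = n' := by
    have := natDegree_X_pow_sub_C (n := n') (r := (1 : F)); rwa [C_1] at this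
  have hudeg : u.natDegree = ℓ := by
    have := natDegree_X_pow_sub_C (n := ℓ) (r := (1 : F)); rwa [C_1] at this
  have hnF : (n : F) ≠ 0 := cast_ne_zero_of_char hchar hn ⟨n', rfl⟩
  have hn'F : (n' : F) ≠ 0 := cast_ne_zero_of_char hchar hn' ⟨n, Nat.mul_comm n n'⟩
  have hssq : Squarefree s := by
    have := (separable_X_pow_sub_C (1 : F) hnF one_ne_zero).squarefree
    rwa [C_1] at this
  have hs'sq : Squarefree s' := by
    have := (separable_X_pow_sub_C (1 : F) hn'F one_ne_zero).squarefree
    rwa [C_1] at this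
  have hus : u ∣ s := by
    rw [hs, hu]
    exact dvd_X_pow_sub_one_of_dvd (hℓ ▸ Nat.gcd_dvd_left n n')
  have husq : Squarefree u := hssq.squarefree_of_dvd hus
  -- gcd decompositions
  set a : Polynomial F := EuclideanDomain.gcd g s with ha
  have ha0 : a ≠ 0 := fun hz => hs0 (EuclideanDomain.gcd_eq_zero_iff.1 hz).2
  set h : Polynomial F := s / a with hh
  have hah : a * h = s :=
    EuclideanDomain.mul_div_cancel' ha0 (EuclideanDomain.gcd_dvd_right g s)
  have hh0 : h ≠ 0 := fun hz => hs0 (by rw [← hah, hz, mul_zero])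
  have eq1 : a.natDegree + h.natDegree = n := by rw [← natDegree_mul ha0 hh0, hah, hsdeg]
  set a' : Polynomial F := EuclideanDomain.gcd g' s' with ha'
  have ha'0 : a' ≠ 0 := fun hz => hs'0 (EuclideanDomain.gcd_eq_zero_iff.1 hz).2
  set h' : Polynomial F := s' / a' with hh'
  have hah' : a' * h' = s' :=
    EuclideanDomain.mul_div_cancel' ha'0 (EuclideanDomain.gcd_dvd_right g' s')
  have hh'0 : h' ≠ 0 := fun hz => hs'0 (by rw [← hah', hz, mul_zero])
  have eq2 : a'.natDegree + h'.natDegree = n' := by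
    rw [← natDegree_mul ha'0 hh'0, hah', hs'deg]
  set G : Polynomial F := EuclideanDomain.gcd h h' with hG
  have hG0 : G ≠ 0 := fun hz => hh0 (EuclideanDomain.gcd_eq_zero_iff.1 hz).1
  set h₂ : Polynomial F := h' / G with hh₂
  have hGh₂ : G * h₂ = h' :=
    EuclideanDomain.mul_div_cancel' hG0 (EuclideanDomain.gcd_dvd_right h h')
  have hh₂0 : h₂ ≠ 0 := fun hz => hh'0 (by rw [← hGh₂, hz, mul_zero])
  have eq3 : G.natDegree + h₂.natDegree = h'.natDegree := by
    rw [← natDegree_mul hG0 hh₂0, hGh₂]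
  set L : Polynomial F := h * h₂ with hL
  have hL0 : L ≠ 0 := mul_ne_zero hh0 hh₂0
  have eq4 : L.natDegree = h.natDegree + h₂.natDegree := natDegree_mul hh0 hh₂0
  set b : Polynomial F := EuclideanDomain.gcd (g * g') u with hb
  have hb0 : b ≠ 0 := fun hz => hu0 (EuclideanDomain.gcd_eq_zero_iff.1 hz).2
  have hbu : b ∣ u := EuclideanDomain.gcd_dvd_right (g * g') u
  set ub : Polynomial F := u / b with hub
  have hbub : b * ub = u := EuclideanDomain.mul_div_cancel' hb0 hbu
  have hub0 : ub ≠ 0 := fun hz => hu0 (by rw [← hbub, hz, mul_zero])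
  have eq5 : b.natDegree + ub.natDegree = ℓ := by rw [← natDegree_mul hb0 hub0, hbub, hudeg]
  -- eq6 : degree of G equals degree of ub
  have hhs : h ∣ s := ⟨a, by rw [← hah]; ring⟩
  have hh's' : h' ∣ s' := ⟨a', by rw [← hah']; ring⟩
  have hGu : G ∣ u := by
    rw [hu, hℓ]
    refine (dvd_gcd_X_pow_sub_one n n' G).1 ⟨?_, ?_⟩
    · exact hs ▸ (EuclideanDomain.gcd_dvd_left h h').trans hhs
    · exact hs' ▸ (EuclideanDomain.gcd_dvd_right h h').trans hh's'
  have hubu : ub ∣ u := ⟨b, by rw [← hbub]; ring⟩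
  have primechar : ∀ q : Polynomial F, Prime q → (q ∣ G ↔ q ∣ ub) := by
    intro q hq
    have e1 : q ∣ G ↔ q ∣ h ∧ q ∣ h' := my_prime_dvd_gcd_iff
    have e2 : q ∣ h ↔ q ∣ s ∧ ¬ q ∣ a :=
      my_prime_dvd_div hssq (EuclideanDomain.gcd_dvd_right g s) hq
    have e3 : q ∣ a ↔ q ∣ g ∧ q ∣ s := my_prime_dvd_gcd_iff
    have e2' : q ∣ h' ↔ q ∣ s' ∧ ¬ q ∣ a' :=
      my_prime_dvd_div hs'sq (EuclideanDomain.gcd_dvd_right g' s') hq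
    have e3' : q ∣ a' ↔ q ∣ g' ∧ q ∣ s' := my_prime_dvd_gcd_iff
    have e4 : (q ∣ s ∧ q ∣ s') ↔ q ∣ u := by
      rw [hs, hs', hu, hℓ]; exact dvd_gcd_X_pow_sub_one n n' q
    have e5 : q ∣ ub ↔ q ∣ u ∧ ¬ q ∣ b := my_prime_dvd_div husq hbu hq
    have e6 : q ∣ g * g' ↔ q ∣ g ∨ q ∣ g' := hq.dvd_mul
    have e7 : q ∣ b ↔ q ∣ (g * g') ∧ q ∣ u := my_prime_dvd_gcd_iff
    have e8 : q ∣ u → (q ∣ s ∧ q ∣ s') := e4.2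
    rw [e1, e2, e2', e5, e7, e6, e3, e3']
    constructor
    · rintro ⟨⟨hqs, hqa⟩, hqs', hqa'⟩
      exact ⟨e4.1 ⟨hqs, hqs'⟩, fun ⟨hor, hqu⟩ => by
        rcases hor with hg1 | hg2
        · exact hqa ⟨hg1, hqs⟩
        · exact hqa' ⟨hg2, hqs'⟩⟩
    · rintro ⟨hqu, hnb⟩
      obtain ⟨hqs, hqs'⟩ := e8 hqu
      refine ⟨⟨hqs, fun ⟨hqg, _⟩ => hnb ⟨Or.inl hqg, hqu⟩⟩,
        ⟨hqs', fun ⟨hqg', _⟩ => hnb ⟨Or.inr hqg', hqu⟩⟩⟩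
  have d1 : G ∣ ub := sqf_dvd_of_primes husq hGu hubu fun q hq hqG => (primechar q hq).1 hqG
  have d2 : ub ∣ G := sqf_dvd_of_primes husq hubu hGu fun q hq hqd => (primechar q hq).2 hqd
  have eq6 : G.natDegree = ub.natDegree :=
    le_antisymm (natDegree_le_of_dvd d1 hub0) (natDegree_le_of_dvd d2 hG0)
  -- eq7 : the degree identity for d
  have hA : pgcd g s = monicize a := rfl
  have hA' : pgcd g' s' = monicize a' := rfl
  have hB : pgcd (g * g') u = monicize b := rfl
  have hA0 : pgcd g s ≠ 0 := by rw [hA]; exact monicize_ne_zero ha0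
  have hA'0 : pgcd g' s' ≠ 0 := by rw [hA']; exact monicize_ne_zero ha'0
  have hB0 : pgcd (g * g') u ≠ 0 := by rw [hB]; exact monicize_ne_zero hb0
  have hAdeg : (pgcd g s).natDegree = a.natDegree := by rw [hA]; exact monicize_natDegree ha0
  have hA'deg : (pgcd g' s').natDegree = a'.natDegree := by
    rw [hA']; exact monicize_natDegree ha'0
  have hBdeg : (pgcd (g * g') u).natDegree = b.natDegree := by
    rw [hB]; exact monicize_natDegree hb0
  have hBu : pgcd (g * g') u ∣ u := (hB ▸ monicize_dvd b).trans hbu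
  have hBV : pgcd (g * g') u ∣ pgcd g s * pgcd g' s' * u :=
    hBu.trans (dvd_mul_left u _)
  have hV0 : pgcd g s * pgcd g' s' * u ≠ 0 := mul_ne_zero (mul_ne_zero hA0 hA'0) hu0
  have hBVc : pgcd (g * g') u * (pgcd g s * pgcd g' s' * u / pgcd (g * g') u)
      = pgcd g s * pgcd g' s' * u := EuclideanDomain.mul_div_cancel' hB0 hBV
  have hQ0 : pgcd g s * pgcd g' s' * u / pgcd (g * g') u ≠ 0 := by
    intro hz
    rw [hz, mul_zero] at hBVc
    exact hV0 hBVc.symm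
  have hVdeg : (pgcd g s * pgcd g' s' * u).natDegree
      = a.natDegree + a'.natDegree + ℓ := by
    rw [natDegree_mul (mul_ne_zero hA0 hA'0) hu0, natDegree_mul hA0 hA'0,
      hAdeg, hA'deg, hudeg]
  have eq7 : d + b.natDegree = a.natDegree + a'.natDegree + ℓ := by
    have hsplit : (pgcd g s * pgcd g' s' * u).natDegree
        = (pgcd (g * g') u).natDegree
          + (pgcd g s * pgcd g' s' * u / pgcd (g * g') u).natDegree := by
      conv_lhs => rw [← hBVc]
      exact natDegree_mul hB0 hQ0
    rw [hVdeg, hBdeg] at hsplit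
    omega
  -- linear independence
  rw [Fintype.linearIndependent_iff]
  intro c hc
  have hcol : ∀ k : Fin n, ∑ i : Fin r, c i * g.coeff ((k.1 + (n - 1) * i.1) % n) = 0 := by
    intro k
    have := congrFun hc (Sum.inl k)
    simpa [Matrix.fromCols, circMat, Finset.sum_apply] using this
  have hcol' : ∀ k : Fin n', ∑ i : Fin r, c i * g'.coeff ((k.1 + (n' - 1) * i.1) % n') = 0 := by
    intro k
    have := congrFun hc (Sum.inr k)
    simpa [Matrix.fromCols, circMat, Finset.sum_apply] using this
  set p : Polynomial F := ∑ i : Fin r, C (c i) * X ^ (i.1) with hp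
  have hdvds : s ∣ p * g := hs ▸ dvd_of_colsums hn g hgnat c hcol
  have hdvds' : s' ∣ p * g' := hs' ▸ dvd_of_colsums hn' g' hg'nat c hcol'
  have hp1 : h ∣ p := my_dvd_of_dvd_mul hs0 hdvds
  have hp2 : h' ∣ p := my_dvd_of_dvd_mul hs'0 hdvds'
  have hLp : L ∣ p := my_lcm_dvd hh0 hh'0 hp1 hp2
  have hpz : p = 0 := by
    by_contra hp0
    have hdeg : p.degree < (r : ℕ) := by
      rw [degree_lt_iff_coeff_zero]
      intro j hj
      rw [hp, finset_sum_coeff]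
      refine Finset.sum_eq_zero fun i _ => ?_
      rw [C_mul_X_pow_eq_monomial, coeff_monomial, if_neg ?_]
      have := i.2
      omega
    have hdegn : p.natDegree < r := (natDegree_lt_iff_degree_lt hp0).2 hdeg
    have hLr : L.natDegree ≤ p.natDegree := natDegree_le_of_dvd hLp hp0
    omega
  intro i
  have hco : p.coeff i.1 = c i := by
    rw [hp, finset_sum_coeff]
    rw [Finset.sum_eq_single i]
    · rw [C_mul_X_pow_eq_monomial, coeff_monomial, if_pos rfl]
    · intro j _ hne
      rw [C_mul_X_pow_eq_monomial, coeff_monomial, if_neg (fun e => hne (Fin.ext e))]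
    · intro habs
      exact absurd (Finset.mem_univ i) habs
  rw [hpz, coeff_zero] at hco
  exact hco.symm
end

section
/- Let F be a field with char F coprime to n and n' (or zero), m = n + n', g, g' polynomials with deg g < n, deg g' < n', ω and ω' primitive n-th and n'-th roots of unity. If ω^j is a root of gcd(g(X), X^n − 1), then the column vector (V(ω^j)_n ; 0_{n'×1}) is an eigenvector of the square double circulant matrix M(g,g')_{m×m} for the eigenvalue 0; symmetrically, if ω'^{j'} is a root of gcd(g'(X), X^{n'} − 1), then (0_{n×1} ; V(ω'^{j'})_{n'}) is an eigenvector for eigenvalue 0. -/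
open Polynomial Matrix

lemma aux_root {F K : Type*} [Field F] [Field K] [Algebra F K] {n : ℕ} (hn : 0 < n)
    {g : Polynomial F} {ζ : K} (h : Polynomial.aeval ζ (pgcd g (X ^ n - 1)) = 0) :
    Polynomial.aeval ζ g = 0 ∧ ζ ^ n = 1 := by
  classical
  set d := EuclideanDomain.gcd g (X ^ n - 1 : Polynomial F) with hd
  have hX : (X ^ n - 1 : Polynomial F) ≠ 0 := by
    intro h0
    have := congrArg (Polynomial.eval 0) h0
    simp [zero_pow hn.ne'] at this
  have hdne : d ≠ 0 := by
    intro h0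
    exact hX (EuclideanDomain.gcd_eq_zero_iff.mp h0).2
  have h0 : Polynomial.aeval ζ d = 0 := by
    rw [pgcd, monicize] at h
    simp only [_root_.map_mul, aeval_C] at h
    rcases mul_eq_zero.mp h with h | h
    · exact absurd ((_root_.map_eq_zero _).mp h)
        (inv_ne_zero (leadingCoeff_ne_zero.mpr hdne))
    · exact h
  constructor
  · obtain ⟨q, hq⟩ := EuclideanDomain.gcd_dvd_left g (X ^ n - 1 : Polynomial F)
    rw [hq, _root_.map_mul, ← hd, h0, zero_mul]
  · obtain ⟨q, hq⟩ := EuclideanDomain.gcd_dvd_right g (X ^ n - 1 : Polynomial F)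
    have := congrArg (Polynomial.aeval ζ) hq
    rw [_root_.map_mul, ← hd, h0, zero_mul] at this
    simp only [map_sub, map_pow, aeval_X, _root_.map_one, sub_eq_zero] at this
    exact this

lemma circ_key {K : Type*} [Field K] {m n : ℕ} (hn : 0 < n) {g : Polynomial K}
    (hdeg : g.natDegree < n) {ζ : K} (hζ : ζ ^ n = 1) (hroot : g.eval ζ = 0) :
    (circMat K m n g).mulVec (fun k : Fin n => ζ ^ (k : ℕ)) = 0 := by
  have hpow : ∀ a : ℕ, ζ ^ (a % n) = ζ ^ a := by
    intro a
    conv_rhs => rw [← Nat.div_add_mod a n]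
    rw [pow_add, pow_mul, hζ, one_pow, one_mul]
  haveI : NeZero n := ⟨hn.ne'⟩
  ext i
  show ∑ k : Fin n, g.coeff ((k.1 + (n - 1) * i.1) % n) * ζ ^ (k.1) = 0
  set c : Fin n := ⟨i.1 % n, Nat.mod_lt _ hn⟩ with hc
  have hswap : ∑ k : Fin n, g.coeff k.1 * ζ ^ (k.1) * ζ ^ (i.1)
      = ∑ k : Fin n, g.coeff ((k.1 + (n - 1) * i.1) % n) * ζ ^ (k.1) := by
    refine Fintype.sum_equiv (Equiv.addRight c) _ _ ?_
    intro k
    have hk : ((Equiv.addRight c) k).1 = (k.1 + i.1 % n) % n := by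
      simp [Fin.add_def, hc]
    rw [hk]
    have hidx : ((k.1 + i.1 % n) % n + (n - 1) * i.1) % n = k.1 := by
      rw [Nat.mod_add_mod]
      have h1 : (k.1 + i.1 % n + (n - 1) * i.1) % n
          = (k.1 + i.1 + (n - 1) * i.1) % n :=
        Nat.ModEq.add_right _ (Nat.ModEq.add_left _ (Nat.mod_modEq i.1 n))
      rw [h1]
      have h3 : (n - 1) * i.1 + i.1 = n * i.1 := by
        conv_rhs => rw [← Nat.succ_pred_eq_of_pos hn]
        rw [Nat.succ_mul]
        rfl
      have h2 : k.1 + i.1 + (n - 1) * i.1 = k.1 + n * i.1 := by omega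
      rw [h2, Nat.add_mul_mod_self_left, Nat.mod_eq_of_lt k.2]
    rw [hidx, hpow, pow_add, hpow, mul_assoc]
  rw [← hswap, ← Finset.sum_mul]
  have heval : ∑ k : Fin n, g.coeff k.1 * ζ ^ (k.1) = g.eval ζ := by
    rw [Polynomial.eval_eq_sum_range' hdeg, Finset.sum_range fun k => g.coeff k * ζ ^ k]
  rw [heval, hroot, zero_mul]

lemma natdeg_lt {F : Type*} [Field F] {p : Polynomial F} {N : ℕ} (hN : 0 < N)
    (h : p.degree < N) : p.natDegree < N := by
  rcases eq_or_ne p 0 with rfl | hp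
  · simpa using hN
  · exact (Polynomial.natDegree_lt_iff_degree_lt hp).mpr h

theorem stmt_15 (F K : Type*) [Field F] [Field K] [Algebra F K]
    (n n' : ℕ) (hn : 0 < n) (hn' : 0 < n')
    (hchar : ringChar F = 0 ∨ Nat.Coprime (ringChar F) (n * n'))
    (ω ω' : K) (hω : IsPrimitiveRoot ω n) (hω' : IsPrimitiveRoot ω' n')
    (g g' : Polynomial F) (hg : g.degree < n) (hg' : g'.degree < n')
    (m : ℕ) (hm : m = n + n') :
    (∀ j : ℕ, Polynomial.aeval (ω ^ j) (pgcd g (X ^ n - 1)) = 0 →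
      (Matrix.fromCols (circMat K m n (g.map (algebraMap F K)))
            (circMat K m n' (g'.map (algebraMap F K)))).mulVec
          (Sum.elim (fun k : Fin n => (ω ^ j) ^ (k : ℕ)) (fun _ : Fin n' => 0)) = 0
      ∧ (Sum.elim (fun k : Fin n => (ω ^ j) ^ (k : ℕ)) (fun _ : Fin n' => (0 : K))) ≠ 0)
    ∧
    (∀ j' : ℕ, Polynomial.aeval (ω' ^ j') (pgcd g' (X ^ n' - 1)) = 0 →
      (Matrix.fromCols (circMat K m n (g.map (algebraMap F K)))
            (circMat K m n' (g'.map (algebraMap F K)))).mulVec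
          (Sum.elim (fun _ : Fin n => 0) (fun k : Fin n' => (ω' ^ j') ^ (k : ℕ))) = 0
      ∧ (Sum.elim (fun _ : Fin n => (0 : K)) (fun k : Fin n' => (ω' ^ j') ^ (k : ℕ))) ≠ 0) := by
  constructor
  · intro j hj
    obtain ⟨hg0, hζ⟩ := aux_root hn hj
    have hdeg : (g.map (algebraMap F K)).natDegree < n :=
      lt_of_le_of_lt (Polynomial.natDegree_map_le) (natdeg_lt hn hg)
    have heval : (g.map (algebraMap F K)).eval (ω ^ j) = 0 := by
      rw [Polynomial.eval_map, ← Polynomial.aeval_def, hg0]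
    have h1 := circ_key (m := m) hn hdeg hζ heval
    constructor
    · rw [fromCols_mulVec_sumElim, h1]
      have h2 : (circMat K m n' (g'.map (algebraMap F K))).mulVec
          (fun _ : Fin n' => (0 : K)) = 0 := by
        ext i; simp [Matrix.mulVec, dotProduct]
      rw [h2, add_zero]
    · intro h
      have := congrFun h (Sum.inl ⟨0, hn⟩)
      simp at this
  · intro j hj
    obtain ⟨hg0, hζ⟩ := aux_root hn' hj
    have hdeg : (g'.map (algebraMap F K)).natDegree < n' :=
      lt_of_le_of_lt (Polynomial.natDegree_map_le) (natdeg_lt hn' hg')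
    have heval : (g'.map (algebraMap F K)).eval (ω' ^ j) = 0 := by
      rw [Polynomial.eval_map, ← Polynomial.aeval_def, hg0]
    have h1 := circ_key (m := m) hn' hdeg hζ heval
    constructor
    · rw [fromCols_mulVec_sumElim, h1]
      have h2 : (circMat K m n (g.map (algebraMap F K))).mulVec
          (fun _ : Fin n => (0 : K)) = 0 := by
        ext i; simp [Matrix.mulVec, dotProduct]
      rw [h2, zero_add]
    · intro h
      have := congrFun h (Sum.inr ⟨0, hn'⟩)
      simp at this
end

section
/- Let F be a field with char F coprime to n and n' (or zero), m = n + n', ℓ = gcd(n, n'), η = ω^{n/ℓ} (a primitive ℓ-th root of unity). For every j̄ with 0 ≤ j̄ < ℓ such that g(η^{j̄}) ≠ 0 ≠ g'(η^{j̄}), the column vector (−g'(η^{j̄}) V(η^{j̄})_n ; g(η^{j̄}) V(η^{j̄})_{n'}) is a nonzero eigenvector of the square double circulant matrix M(g,g')_{m×m} for the eigenvalue 0. -/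
open Polynomial Matrix

open Fin.NatCast in
private lemma sum_circ_aux {K : Type*} [Field K] {n : ℕ} (hn : 0 < n) (ζ : K) (hζ : ζ ^ n = 1)
    (G : Polynomial K) (hG : G.natDegree < n) (i : ℕ) :
    ∑ k : Fin n, G.coeff ((k.1 + (n - 1) * i) % n) * ζ ^ k.1 = ζ ^ i * G.eval ζ := by
  haveI : NeZero n := ⟨hn.ne'⟩
  have key : ∀ r : ℕ, ζ ^ r * ∑ k : Fin n, G.coeff ((k.1 + r) % n) * ζ ^ k.1 = G.eval ζ := by
    intro r
    rw [Finset.mul_sum]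
    have h1 : ∀ k : Fin n, ζ ^ r * (G.coeff ((k.1 + r) % n) * ζ ^ k.1)
        = G.coeff (((k : Fin n) + (r : Fin n)).1) * ζ ^ (((k : Fin n) + (r : Fin n)).1) := by
      intro k
      have hv : ((k + (r : Fin n)) : Fin n).1 = (k.1 + r) % n := by
        rw [Fin.val_add, Fin.val_natCast, Nat.add_mod, Nat.mod_mod_of_dvd _ (dvd_refl n),
          ← Nat.add_mod]
      rw [hv]
      have hp : ζ ^ (k.1 + r) = ζ ^ ((k.1 + r) % n) := by
        conv_lhs => rw [← Nat.mod_add_div (k.1 + r) n]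
        rw [pow_add, pow_mul, hζ, one_pow, mul_one]
      rw [← hp, pow_add]; ring
    rw [Finset.sum_congr rfl (fun k _ => h1 k)]
    rw [Fintype.sum_equiv (Equiv.addRight (r : Fin n))
      (fun k => G.coeff ((k + (r : Fin n)).1) * ζ ^ ((k + (r : Fin n)).1))
      (fun s : Fin n => G.coeff s.1 * ζ ^ s.1) (fun k => rfl)]
    rw [Polynomial.eval_eq_sum_range' hG, ← Fin.sum_univ_eq_sum_range]
  have h := key ((n - 1) * i)
  have hni : n * i = i + (n - 1) * i := by
    cases n with
    | zero => exact absurd hn (lt_irrefl 0)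
    | succ k => rw [Nat.succ_sub_one, Nat.succ_mul]; exact Nat.add_comm _ _
  calc ∑ k : Fin n, G.coeff ((k.1 + (n - 1) * i) % n) * ζ ^ k.1
      = ζ ^ (n * i) * ∑ k : Fin n, G.coeff ((k.1 + (n - 1) * i) % n) * ζ ^ k.1 := by
        rw [pow_mul, hζ, one_pow, one_mul]
    _ = ζ ^ i * (ζ ^ ((n - 1) * i) * ∑ k : Fin n, G.coeff ((k.1 + (n - 1) * i) % n) * ζ ^ k.1) := by
        rw [← mul_assoc, ← pow_add, ← hni]
    _ = ζ ^ i * G.eval ζ := by rw [h]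

theorem stmt_16 (F K : Type*) [Field F] [Field K] [Algebra F K]
    (n n' : ℕ) (hn : 0 < n) (hn' : 0 < n')
    (hchar : ringChar F = 0 ∨ Nat.Coprime (ringChar F) (n * n'))
    (ω : K) (hω : IsPrimitiveRoot ω n)
    (g g' : Polynomial F) (hg : g.degree < n) (hg' : g'.degree < n')
    (m : ℕ) (hm : m = n + n')
    (ℓ : ℕ) (hℓ : ℓ = Nat.gcd n n')
    (η : K) (hη : η = ω ^ (n / ℓ))
    (j : ℕ) (hj : j < ℓ)
    (hgj : Polynomial.aeval (η ^ j) g ≠ 0)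
    (hg'j : Polynomial.aeval (η ^ j) g' ≠ 0) :
    (Sum.elim
        (fun k : Fin n => -(Polynomial.aeval (η ^ j) g') * (η ^ j) ^ (k : ℕ))
        (fun k : Fin n' => (Polynomial.aeval (η ^ j) g) * (η ^ j) ^ (k : ℕ))) ≠ 0
    ∧
    (Matrix.fromCols (circMat K m n (g.map (algebraMap F K)))
          (circMat K m n' (g'.map (algebraMap F K)))).mulVec
        (Sum.elim
          (fun k : Fin n => -(Polynomial.aeval (η ^ j) g') * (η ^ j) ^ (k : ℕ))
          (fun k : Fin n' => (Polynomial.aeval (η ^ j) g) * (η ^ j) ^ (k : ℕ))) = 0 := by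
  have hℓn : ℓ ∣ n := hℓ ▸ Nat.gcd_dvd_left n n'
  have hℓn' : ℓ ∣ n' := hℓ ▸ Nat.gcd_dvd_right n n'
  set ζ : K := η ^ j with hζdef
  set c : K := Polynomial.aeval ζ g with hc
  set c' : K := Polynomial.aeval ζ g' with hc'
  have hζℓ : ζ ^ ℓ = 1 := by
    have h1 : ζ ^ ℓ = (ω ^ n) ^ j := by
      rw [hζdef, hη, ← pow_mul ω (n / ℓ) j, ← pow_mul ω (n / ℓ * j) ℓ, ← pow_mul ω n j]
      congr 1
      rw [mul_right_comm, Nat.div_mul_cancel hℓn]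
    rw [h1, hω.pow_eq_one, one_pow]
  have hζn : ζ ^ n = 1 := by
    obtain ⟨d, hd⟩ := hℓn
    rw [hd, pow_mul, hζℓ, one_pow]
  have hζn' : ζ ^ n' = 1 := by
    obtain ⟨d, hd⟩ := hℓn'
    rw [hd, pow_mul, hζℓ, one_pow]
  have hdg : (g.map (algebraMap F K)).natDegree < n := by
    rcases eq_or_ne g 0 with h | h
    · simp [h, hn]
    · exact lt_of_le_of_lt Polynomial.natDegree_map_le
        ((Polynomial.natDegree_lt_iff_degree_lt h).2 hg)
  have hdg' : (g'.map (algebraMap F K)).natDegree < n' := by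
    rcases eq_or_ne g' 0 with h | h
    · simp [h, hn']
    · exact lt_of_le_of_lt Polynomial.natDegree_map_le
        ((Polynomial.natDegree_lt_iff_degree_lt h).2 hg')
  have hevg : (g.map (algebraMap F K)).eval ζ = c := by
    rw [Polynomial.eval_map, hc, Polynomial.aeval_def]
  have hevg' : (g'.map (algebraMap F K)).eval ζ = c' := by
    rw [Polynomial.eval_map, hc', Polynomial.aeval_def]
  constructor
  · intro h
    apply hg'j
    have := congrFun h (Sum.inl ⟨0, hn⟩)
    simpa using this
  · rw [Matrix.fromCols_mulVec_sumElim]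
    funext i
    simp only [Pi.add_apply, Matrix.mulVec, dotProduct, circMat, Matrix.of_apply,
      Pi.zero_apply]
    have e1 : ∑ k : Fin n, (g.map (algebraMap F K)).coeff ((k.1 + (n - 1) * i.1) % n)
        * (-c' * ζ ^ k.1)
        = -c' * (ζ ^ i.1 * c) := by
      rw [← hevg, ← sum_circ_aux hn ζ hζn _ hdg i.1, Finset.mul_sum]
      exact Finset.sum_congr rfl fun k _ => by ring
    have e2 : ∑ k : Fin n', (g'.map (algebraMap F K)).coeff ((k.1 + (n' - 1) * i.1) % n')
        * (c * ζ ^ k.1)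
        = c * (ζ ^ i.1 * c') := by
      rw [← hevg', ← sum_circ_aux hn' ζ hζn' _ hdg' i.1, Finset.mul_sum]
      exact Finset.sum_congr rfl fun k _ => by ring
    rw [e1, e2]; ring
end
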